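/- arXiv:math/0211088 — 7 statements merged into one kernel-verified Lean document; each statement's English description precedes it below -/
import Mathlib

section
/- Let A be a commutative ring, B an extension ring of A that is finite as an A-module, and let I ⊆ A be the conductor ideal, i.e. the annihilator of the A-module B/A (equivalently, the largest ideal of A that is also an ideal of B). Then the sequence 0 → A → B ⊕ A/I → B/I → 0 is exact, where the first map is a ↦ (a, a mod I) and the second is (b, a mod I) ↦ (b mod I) − (a mod I). -/
/-- `A ⊆ B` commutative rings with `B` finite over `A`, `I ⊆ A` the conductor
ideal (annihilator of `B/A`, i.e. `{a : a·B ⊆ A}`), and `J` the corresponding ideal of `B`.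
Then `0 → A → B ⊕ A/I → B/I → 0` is exact, where the first map is `a ↦ (a, a mod I)` and the
second is `(b, a mod I) ↦ (b mod I) - (a mod I)`. -/
theorem stmt0 (A B : Type*) [CommRing A] [CommRing B] [Algebra A B]
    (hinj : Function.Injective (algebraMap A B))
    (hfin : Module.Finite A B)
    (I : Ideal A)
    (hI : ∀ a : A, a ∈ I ↔ ∀ b : B, ∃ a' : A, algebraMap A B a' = algebraMap A B a * b)
    (J : Ideal B) (hJ : J = Ideal.map (algebraMap A B) I)
    (hle : I ≤ J.comap (algebraMap A B)) :
    Function.Injective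
      (fun a : A => ((algebraMap A B a, Ideal.Quotient.mk I a) : B × A ⧸ I)) ∧
    (∀ p : B × A ⧸ I,
      Ideal.Quotient.mk J p.1 - Ideal.quotientMap J (algebraMap A B) hle p.2 = 0 ↔
        ∃ a : A, ((algebraMap A B a, Ideal.Quotient.mk I a) : B × A ⧸ I) = p) ∧
    Function.Surjective (fun p : B × A ⧸ I =>
      Ideal.Quotient.mk J p.1 - Ideal.quotientMap J (algebraMap A B) hle p.2) := by
  have hJrange : ∀ x ∈ J, ∃ a : A, algebraMap A B a = x := by
    intro x hx
    rw [hJ] at hx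
    rw [Ideal.map, Ideal.span, Submodule.mem_span_set'] at hx
    obtain ⟨n, f, g, hsum⟩ := hx
    have hterm : ∀ i : Fin n, ∃ a : A, algebraMap A B a = f i • (g i : B) := by
      intro i
      obtain ⟨a, ha, hga⟩ := (g i).2
      obtain ⟨a', ha'⟩ := (hI a).mp ha (f i)
      refine ⟨a', ?_⟩
      rw [ha', hga, smul_eq_mul, mul_comm]
    choose c hc using hterm
    refine ⟨∑ i, c i, ?_⟩
    rw [map_sum, ← hsum]
    exact Finset.sum_congr rfl fun i _ => hc i
  refine ⟨?_, ?_, ?_⟩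
  · intro a b h
    exact hinj (congrArg Prod.fst h)
  · intro p
    constructor
    · intro h
      obtain ⟨a, ha⟩ := Ideal.Quotient.mk_surjective p.2
      rw [← ha, Ideal.quotientMap_mk, sub_eq_zero] at h
      have hmem : p.1 - algebraMap A B a ∈ J := Ideal.Quotient.eq.mp h
      obtain ⟨c, hc⟩ := hJrange _ hmem
      have hcJ : algebraMap A B c ∈ J := hc ▸ hmem
      have hcI : c ∈ I := by
        rw [hI]
        intro b
        have : algebraMap A B c * b ∈ J := J.mul_mem_right b hcJ
        exact hJrange _ this
      refine ⟨a + c, Prod.ext ?_ ?_⟩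
      · simp only [map_add, hc]
        ring
      · rw [← ha]
        simp only []
        rw [map_add]
        have : (Ideal.Quotient.mk I) c = 0 := Ideal.Quotient.eq_zero_iff_mem.mpr hcI
        rw [this, add_zero]
    · rintro ⟨a, rfl⟩
      simp [Ideal.quotientMap_mk]
  · intro y
    obtain ⟨b, hb⟩ := Ideal.Quotient.mk_surjective y
    exact ⟨(b, 0), by simp [hb]⟩
end

section
/- Let A ⊆ B be commutative rings with conductor ideal I. Then the sequence of groups 1 → A^× → B^× × (A/I)^× → (B/I)^× is exact: the first map is a ↦ (a, a mod I), the second is (b, u) ↦ (b mod I)·(lift of u)^{-1}, and its kernel is exactly the image of A^×. In particular, if b ∈ B^× and a ∈ A with a mod I = b mod I and a mod I invertible in A/I, then b ∈ A^×. -/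
/-- `A ⊆ B` commutative rings with conductor ideal `I` (and `J` the corresponding
ideal of `B`).  The sequence `1 → A^× → B^× × (A/I)^× → (B/I)^×` is exact: the first map
`a ↦ (a, a mod I)` is injective and the kernel of `(b,u) ↦ (b mod I)·u⁻¹` is its image.
In particular, if `b ∈ B^×`, `a ∈ A` with `a ≡ b mod I` and `a mod I` invertible in `A/I`,
then `b` lies in `A^×`. -/
theorem stmt1 (A B : Type*) [CommRing A] [CommRing B] [Algebra A B]
    (hinj : Function.Injective (algebraMap A B))
    (I : Ideal A)
    (hI : ∀ a : A, a ∈ I ↔ ∀ b : B, ∃ a' : A, algebraMap A B a' = algebraMap A B a * b)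
    (J : Ideal B) (hJ : J = Ideal.map (algebraMap A B) I)
    (hle : I ≤ J.comap (algebraMap A B)) :
    Function.Injective (fun a : Aˣ =>
      ((Units.map (algebraMap A B).toMonoidHom a,
        Units.map (Ideal.Quotient.mk I).toMonoidHom a) : Bˣ × (A ⧸ I)ˣ)) ∧
    (∀ p : Bˣ × (A ⧸ I)ˣ,
      Units.map (Ideal.Quotient.mk J).toMonoidHom p.1 *
          (Units.map (Ideal.quotientMap J (algebraMap A B) hle).toMonoidHom p.2)⁻¹ = 1 ↔
        ∃ a : Aˣ,
          ((Units.map (algebraMap A B).toMonoidHom a,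
            Units.map (Ideal.Quotient.mk I).toMonoidHom a) : Bˣ × (A ⧸ I)ˣ) = p) ∧
    (∀ (b : Bˣ) (a : A),
      Ideal.Quotient.mk J (algebraMap A B a) = Ideal.Quotient.mk J (b : B) →
      IsUnit (Ideal.Quotient.mk I a) →
      ∃ u : Aˣ, algebraMap A B (u : A) = (b : B)) := by
  set f := algebraMap A B with hf
  -- every element of J is the image of an element of I
  have hrange : ∀ x ∈ J, ∃ a' ∈ I, f a' = x := by
    intro x hx
    rw [hJ, Ideal.map] at hx
    refine Submodule.span_induction ?_ ?_ ?_ ?_ hx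
    · rintro y ⟨a, ha, rfl⟩; exact ⟨a, ha, rfl⟩
    · exact ⟨0, I.zero_mem, map_zero _⟩
    · rintro y z _ _ ⟨a, ha, rfl⟩ ⟨a', ha', rfl⟩
      exact ⟨a + a', I.add_mem ha ha', map_add _ _ _⟩
    · rintro b y _ ⟨a, ha, rfl⟩
      obtain ⟨a'', ha''⟩ := (hI a).1 ha b
      refine ⟨a'', ?_, ?_⟩
      · rw [hI]
        intro b2
        obtain ⟨a3, ha3⟩ := (hI a).1 ha (b * b2)
        exact ⟨a3, by rw [ha3, ha'']; ring⟩
      · rw [ha'', smul_eq_mul]; ring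
  have hcomap : ∀ a : A, f a ∈ J → a ∈ I := by
    intro a ha
    obtain ⟨a', ha', h⟩ := hrange _ ha
    exact hinj h ▸ ha'
  have hQinj : Function.Injective (Ideal.quotientMap J f hle) := by
    refine Ideal.quotientMap_injective' (fun a ha => ?_)
    exact hcomap a ha
  have part3 : ∀ (b : Bˣ) (a : A),
      Ideal.Quotient.mk J (f a) = Ideal.Quotient.mk J (b : B) →
      IsUnit (Ideal.Quotient.mk I a) →
      ∃ u : Aˣ, f (u : A) = (b : B) := by
    intro b a hab hunit
    have hdiff : (b : B) - f a ∈ J := by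
      have := Ideal.Quotient.eq.mp hab
      have := J.neg_mem this
      rwa [neg_sub] at this
    obtain ⟨j, hjI, hj⟩ := hrange _ hdiff
    set a0 := a + j with ha0
    have hfa0 : f a0 = (b : B) := by rw [ha0, map_add, hj]; ring
    have hmk : Ideal.Quotient.mk I a0 = Ideal.Quotient.mk I a :=
      Ideal.Quotient.eq.mpr (by simpa [ha0] using hjI)
    have hunit0 : IsUnit (Ideal.Quotient.mk I a0) := hmk ▸ hunit
    obtain ⟨v, hv⟩ := hunit0
    obtain ⟨c, hc⟩ := Ideal.Quotient.mk_surjective ((v⁻¹ : (A ⧸ I)ˣ) : A ⧸ I)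
    have hmul : Ideal.Quotient.mk I (a0 * c) = 1 := by
      rw [map_mul, ← hv, hc]; exact v.mul_inv
    have hiI : a0 * c - 1 ∈ I := by
      rw [← Ideal.Quotient.eq]
      simpa using hmul
    set i := a0 * c - 1 with hi
    have hB : f a0 * f c = 1 + f i := by
      rw [← map_mul, hi, map_sub, map_one, map_mul]; ring
    have hfc : f c = (↑b⁻¹ : B) + (↑b⁻¹ : B) * f i := by
      have : (↑b⁻¹ : B) * (f a0 * f c) = (↑b⁻¹ : B) * (1 + f i) := by rw [hB]
      rw [hfa0] at this
      calc f c = (↑b⁻¹ : B) * ((b : B) * f c) := by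
            rw [← mul_assoc, b.inv_mul, one_mul]
        _ = (↑b⁻¹ : B) * (1 + f i) := this
        _ = (↑b⁻¹ : B) + (↑b⁻¹ : B) * f i := by ring
    obtain ⟨d, hd⟩ := (hI i).1 hiI (↑b⁻¹ : B)
    have hbinv : f (c - d) = (↑b⁻¹ : B) := by
      rw [map_sub, hfc, hd]; ring
    have hone : f (a0 * (c - d)) = f 1 := by
      rw [map_mul, hfa0, hbinv, map_one, b.mul_inv]
    have hone' : a0 * (c - d) = 1 := hinj hone
    exact ⟨⟨a0, c - d, hone', by rw [mul_comm]; exact hone'⟩, hfa0⟩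
  refine ⟨?_, ?_, part3⟩
  · intro a a' h
    have h1 : Units.map f.toMonoidHom a = Units.map f.toMonoidHom a' :=
      congrArg Prod.fst h
    have h2 : f (a : A) = f (a' : A) := congrArg Units.val h1
    exact Units.ext (hinj h2)
  · intro p
    constructor
    · intro h
      rw [mul_inv_eq_one] at h
      have hval : Ideal.Quotient.mk J (p.1 : B) =
          Ideal.quotientMap J f hle ((p.2 : (A ⧸ I)ˣ) : A ⧸ I) := congrArg Units.val h
      obtain ⟨a, ha⟩ := Ideal.Quotient.mk_surjective ((p.2 : (A ⧸ I)ˣ) : A ⧸ I)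
      have hab : Ideal.Quotient.mk J (f a) = Ideal.Quotient.mk J (p.1 : B) := by
        rw [hval, ← ha, Ideal.quotientMap_mk]
      have hunit : IsUnit (Ideal.Quotient.mk I a) := ha ▸ p.2.isUnit
      obtain ⟨u, hu⟩ := part3 p.1 a hab hunit
      refine ⟨u, Prod.ext (Units.ext ?_) (Units.ext ?_)⟩
      · exact hu
      · apply hQinj
        show Ideal.quotientMap J f hle (Ideal.Quotient.mk I (u : A)) = _
        rw [Ideal.quotientMap_mk, hu, hval]
    · rintro ⟨a, rfl⟩
      rw [mul_inv_eq_one]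
      refine Units.ext ?_
      show Ideal.Quotient.mk J (f (a : A)) =
        Ideal.quotientMap J f hle (Ideal.Quotient.mk I (a : A))
      rw [Ideal.quotientMap_mk]
end

section
/- Let M be a commutative monoid, J ⊆ M an ideal, and k a commutative ring. Let k[M] denote the monoid algebra with basis χ^m, and (χ^J) ⊆ k[M] the ideal generated by {χ^m : m ∈ J}. Then there is a canonical k-algebra isomorphism k[M // J] / (χ^∞) ≅ k[M] / (χ^J), where M // J is the ideal quotient monoid with absorbing element ∞. -/
/-- for a commutative monoid `M`, an ideal `J ⊆ M`, and a commutative ring `k`,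
there is a canonical `k`-algebra isomorphism `k[M // J]/(χ^∞) ≅ k[M]/(χ^J)`.  Here the ideal
quotient `Q = M // J` (with absorbing element `∞` and quotient map `φ`) is axiomatized by:
`φ` is a monoid homomorphism, `φ⁻¹(∞) = J`, `φ` is injective on `M \ J`, every element of `Q`
is `∞` or in the image of `φ`, and `∞` is absorbing. -/
theorem stmt3 (M : Type*) [AddCommMonoid M] (J : Set M)
    (hJ : ∀ p : M, ∀ j ∈ J, p + j ∈ J)
    (k : Type*) [CommRing k]
    (Q : Type*) [AddCommMonoid Q] (infty : Q) (φ : M →+ Q)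
    (hinfty : ∀ q : Q, infty + q = infty)
    (hφJ : ∀ m : M, φ m = infty ↔ m ∈ J)
    (hφinj : ∀ m m' : M, m ∉ J → m' ∉ J → φ m = φ m' → m = m')
    (hφsurj : ∀ q : Q, q = infty ∨ ∃ m : M, φ m = q) :
    Nonempty
      ((AddMonoidAlgebra k Q ⧸ Ideal.span {AddMonoidAlgebra.single infty (1 : k)}) ≃ₐ[k]
        (AddMonoidAlgebra k M ⧸
          Ideal.span ((fun m => AddMonoidAlgebra.single m (1 : k)) '' J))) := by
  classical
  set I1 : Ideal (AddMonoidAlgebra k Q) :=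
    Ideal.span {AddMonoidAlgebra.single infty (1 : k)} with hI1
  set I2 : Ideal (AddMonoidAlgebra k M) :=
    Ideal.span ((fun m => AddMonoidAlgebra.single m (1 : k)) '' J) with hI2
  -- basic facts
  have z2 : ∀ n ∈ J, Ideal.Quotient.mk I2 (AddMonoidAlgebra.single n (1 : k)) = 0 := by
    intro n hn
    rw [Ideal.Quotient.eq_zero_iff_mem]
    exact Ideal.subset_span ⟨n, hn, rfl⟩
  have z1 : Ideal.Quotient.mk I1 (AddMonoidAlgebra.single infty (1 : k)) = 0 := by
    rw [Ideal.Quotient.eq_zero_iff_mem]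
    exact Ideal.subset_span rfl
  -- forward monoid hom
  let F1 : Multiplicative M →* (AddMonoidAlgebra k Q ⧸ I1) :=
    { toFun := fun m =>
        Ideal.Quotient.mk I1 (AddMonoidAlgebra.single (φ m.toAdd) (1 : k))
      map_one' := by
        show Ideal.Quotient.mk I1 (AddMonoidAlgebra.single (φ 0) (1 : k)) = 1
        rw [map_zero, ← AddMonoidAlgebra.one_def, map_one]
      map_mul' := by
        intro m m'
        show Ideal.Quotient.mk I1 (AddMonoidAlgebra.single (φ ((m * m').toAdd)) (1 : k)) =
          Ideal.Quotient.mk I1 (AddMonoidAlgebra.single (φ m.toAdd) (1 : k)) *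
          Ideal.Quotient.mk I1 (AddMonoidAlgebra.single (φ m'.toAdd) (1 : k))
        rw [toAdd_mul, map_add, ← map_mul, AddMonoidAlgebra.single_mul_single, one_mul] }
  let f0 : AddMonoidAlgebra k M →ₐ[k] (AddMonoidAlgebra k Q ⧸ I1) :=
    AddMonoidAlgebra.lift k _ M F1
  have f0single : ∀ m : M, f0 (AddMonoidAlgebra.single m (1 : k)) =
      Ideal.Quotient.mk I1 (AddMonoidAlgebra.single (φ m) (1 : k)) := by
    intro m
    simp [f0, AddMonoidAlgebra.lift_single, F1]
  have hker : ∀ a ∈ I2, f0 a = 0 := by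
    intro a ha
    have : I2 ≤ RingHom.ker f0.toRingHom := by
      rw [hI2, Ideal.span_le]
      rintro x ⟨m, hm, rfl⟩
      simp only [SetLike.mem_coe, RingHom.mem_ker]
      show f0 (AddMonoidAlgebra.single m (1 : k)) = 0
      rw [f0single m, (hφJ m).2 hm, z1]
    exact this ha
  let f : (AddMonoidAlgebra k M ⧸ I2) →ₐ[k] (AddMonoidAlgebra k Q ⧸ I1) :=
    Ideal.Quotient.liftₐ I2 f0 hker
  -- backward map
  have key : ∀ m m' : M, φ m = φ m' →
      Ideal.Quotient.mk I2 (AddMonoidAlgebra.single m (1 : k)) =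
      Ideal.Quotient.mk I2 (AddMonoidAlgebra.single m' (1 : k)) := by
    intro m m' h
    by_cases hm : m ∈ J
    · have hm' : m' ∈ J := (hφJ m').1 (h ▸ (hφJ m).2 hm)
      rw [z2 m hm, z2 m' hm']
    · by_cases hm' : m' ∈ J
      · exact absurd ((hφJ m).1 (h.trans ((hφJ m').2 hm'))) hm
      · rw [hφinj m m' hm hm' h]
  let gfun : Q → (AddMonoidAlgebra k M ⧸ I2) := fun q =>
    if h : ∃ m : M, φ m = q then
      Ideal.Quotient.mk I2 (AddMonoidAlgebra.single h.choose (1 : k))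
    else 0
  have gspec : ∀ m : M, gfun (φ m) =
      Ideal.Quotient.mk I2 (AddMonoidAlgebra.single m (1 : k)) := by
    intro m
    have h : ∃ m' : M, φ m' = φ m := ⟨m, rfl⟩
    simp only [gfun, dif_pos h]
    exact key _ _ h.choose_spec
  have ginfty : gfun infty = 0 := by
    by_cases h : ∃ m : M, φ m = infty
    · simp only [gfun, dif_pos h]
      exact z2 _ ((hφJ _).1 h.choose_spec)
    · simp only [gfun, dif_neg h]
  let G1 : Multiplicative Q →* (AddMonoidAlgebra k M ⧸ I2) :=
    { toFun := fun q => gfun q.toAdd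
      map_one' := by
        have : gfun (φ 0) = Ideal.Quotient.mk I2 (AddMonoidAlgebra.single (0 : M) (1 : k)) :=
          gspec 0
        rw [map_zero] at this
        show gfun (0 : Q) = 1
        rw [this, ← AddMonoidAlgebra.one_def, map_one]
      map_mul' := by
        intro q q'
        show gfun (q.toAdd + q'.toAdd) = gfun q.toAdd * gfun q'.toAdd
        rcases hφsurj q.toAdd with hq | ⟨m, hm⟩
        · rw [hq, hinfty, ginfty, zero_mul]
        rcases hφsurj q'.toAdd with hq' | ⟨m', hm'⟩
        · rw [hq', add_comm, hinfty, ginfty, mul_zero]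
        rw [← hm, ← hm', ← map_add, gspec, gspec, gspec, ← map_mul,
          AddMonoidAlgebra.single_mul_single, one_mul] }
  let g0 : AddMonoidAlgebra k Q →ₐ[k] (AddMonoidAlgebra k M ⧸ I2) :=
    AddMonoidAlgebra.lift k _ Q G1
  have g0single : ∀ q : Q, g0 (AddMonoidAlgebra.single q (1 : k)) = gfun q := by
    intro q
    simp [g0, AddMonoidAlgebra.lift_single, G1]
  have hker' : ∀ a ∈ I1, g0 a = 0 := by
    intro a ha
    have : I1 ≤ RingHom.ker g0.toRingHom := by
      rw [hI1, Ideal.span_le]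
      rintro x hx
      rcases hx with rfl
      simp only [SetLike.mem_coe, RingHom.mem_ker]
      show g0 (AddMonoidAlgebra.single infty (1 : k)) = 0
      rw [g0single, ginfty]
    exact this ha
  let g : (AddMonoidAlgebra k Q ⧸ I1) →ₐ[k] (AddMonoidAlgebra k M ⧸ I2) :=
    Ideal.Quotient.liftₐ I1 g0 hker'
  have fmk : ∀ x, f (Ideal.Quotient.mk I2 x) = f0 x := fun x => rfl
  have gmk : ∀ x, g (Ideal.Quotient.mk I1 x) = g0 x := fun x => rfl
  refine ⟨AlgEquiv.ofAlgHom g f ?_ ?_⟩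
  · apply Ideal.Quotient.algHom_ext
    apply AddMonoidAlgebra.algHom_ext
    intro m
    simp only [AlgHom.comp_apply, Ideal.Quotient.mkₐ_eq_mk, AlgHom.id_apply]
    rw [fmk, f0single, gmk, g0single, gspec]
    exact Subsingleton.elim _ _
  · apply Ideal.Quotient.algHom_ext
    apply AddMonoidAlgebra.algHom_ext
    intro q
    simp only [AlgHom.comp_apply, Ideal.Quotient.mkₐ_eq_mk, AlgHom.id_apply]
    rw [gmk, g0single]
    rcases hφsurj q with rfl | ⟨m, rfl⟩
    · rw [ginfty, map_zero, z1]
    · rw [gspec, fmk, f0single]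
    exact Subsingleton.elim _ _
end

section
/- Let P be a fine monoid and S = P \ 𝔭 the face complementary to a prime ideal 𝔭 ⊆ P. Let P_𝔭 = S^{-1}P / (S^{-1}P)^× be the sharp localization. Then the dual map P_𝔭^∨ → P^∨ (where Q^∨ = Hom(Q, ℕ)) is injective, its image consists exactly of those homomorphisms φ: P → ℕ with φ(S) = {0}, and the complement P^∨ \ P_𝔭^∨ of this image is an ideal of P^∨. Consequently there is a canonical surjective ring homomorphism k[P^∨] → k[P_𝔭^∨] for any commutative ring k. -/
/-- Let `P` be a fine monoid, `𝔭 ⊆ P` a prime ideal with complementary face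
`S = P \ 𝔭`, and `P_𝔭 = S⁻¹P/(S⁻¹P)^×` the sharp localization (axiomatized below by the
surjective homomorphism `loc : P → P_𝔭` with `loc a = loc b ↔ a + s = b + t` for some
`s, t ∈ S`).  Then the dual map `P_𝔭^∨ → P^∨`, `ψ ↦ ψ ∘ loc`, is injective, its image is
exactly `{φ : P → ℕ | φ(S) = 0}`, the complement of the image is an ideal of `P^∨`, and
consequently there is a canonical surjective (`k`-algebra) homomorphism
`k[P^∨] → k[P_𝔭^∨]`. -/
theorem stmt5 (P : Type*) [AddCommMonoid P]
    (hcancel : ∀ a b c : P, a + b = a + c → b = c)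
    (hfg : ∃ s : Finset P, AddSubmonoid.closure (s : Set P) = ⊤)
    (𝔭 : Set P) (hideal : ∀ p : P, ∀ j ∈ 𝔭, p + j ∈ 𝔭)
    (S : Set P) (hS : S = 𝔭ᶜ)
    (hsub : 0 ∈ S ∧ ∀ a b : P, a ∈ S → b ∈ S → a + b ∈ S)
    (Pp : Type*) [AddCommMonoid Pp] (loc : P →+ Pp)
    (hsurj : Function.Surjective loc)
    (hker : ∀ a b : P, loc a = loc b ↔ ∃ s ∈ S, ∃ t ∈ S, a + s = b + t)
    (k : Type*) [CommRing k] :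
    Function.Injective (fun ψ : Pp →+ ℕ => ψ.comp loc) ∧
    (Set.range (fun ψ : Pp →+ ℕ => ψ.comp loc) = {φ : P →+ ℕ | ∀ s ∈ S, φ s = 0}) ∧
    (∀ φ : P →+ ℕ, φ ∉ Set.range (fun ψ : Pp →+ ℕ => ψ.comp loc) →
      ∀ χ : P →+ ℕ, χ + φ ∉ Set.range (fun ψ : Pp →+ ℕ => ψ.comp loc)) ∧
    ∃ f : AddMonoidAlgebra k (P →+ ℕ) →ₐ[k] AddMonoidAlgebra k (Pp →+ ℕ),
      Function.Surjective f ∧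
      (∀ ψ : Pp →+ ℕ,
        f (AddMonoidAlgebra.single (ψ.comp loc) (1 : k)) = AddMonoidAlgebra.single ψ 1) ∧
      (∀ φ : P →+ ℕ, φ ∉ Set.range (fun ψ : Pp →+ ℕ => ψ.comp loc) →
        f (AddMonoidAlgebra.single φ (1 : k)) = 0) := by
  classical
  have hinj : Function.Injective (fun ψ : Pp →+ ℕ => ψ.comp loc) := by
    intro ψ₁ ψ₂ h
    ext x
    obtain ⟨a, rfl⟩ := hsurj x
    exact DFunLike.congr_fun h a
  have h0S : 0 ∈ S := hsub.1
  have hcong : ∀ (φ : P →+ ℕ), (∀ s ∈ S, φ s = 0) → ∀ a b : P, loc a = loc b → φ a = φ b := by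
    intro φ hφ a b hab
    obtain ⟨s, hs, t, ht, he⟩ := (hker a b).1 hab
    have h2 := congrArg φ he
    simpa [map_add, hφ s hs, hφ t ht] using h2
  have hrange : Set.range (fun ψ : Pp →+ ℕ => ψ.comp loc)
      = {φ : P →+ ℕ | ∀ s ∈ S, φ s = 0} := by
    ext φ
    constructor
    · rintro ⟨ψ, rfl⟩ s hs
      have h1 : loc s = loc 0 := (hker s 0).2 ⟨0, h0S, s, hs, by simp⟩
      simp [AddMonoidHom.comp_apply, h1]
    · intro hφ
      choose g hg using hsurj
      refine ⟨{ toFun := fun x => φ (g x), map_zero' := ?_, map_add' := ?_ }, ?_⟩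
      · have : φ (g 0) = φ 0 := hcong φ hφ _ _ (by rw [hg, map_zero])
        simpa using this
      · intro x y
        have : φ (g (x + y)) = φ (g x + g y) := hcong φ hφ _ _ (by rw [hg, map_add, hg, hg])
        simpa using this
      · ext a
        exact hcong φ hφ (g (loc a)) a (hg _)
  have hidl : ∀ φ : P →+ ℕ, φ ∉ Set.range (fun ψ : Pp →+ ℕ => ψ.comp loc) →
      ∀ χ : P →+ ℕ, χ + φ ∉ Set.range (fun ψ : Pp →+ ℕ => ψ.comp loc) := by
    intro φ hφ χ hmem
    rw [hrange] at hφ hmem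
    apply hφ
    intro s hs
    have := hmem s hs
    simp only [AddMonoidHom.add_apply] at this
    omega
  refine ⟨hinj, hrange, hidl, ?_⟩
  set R := Set.range (fun ψ : Pp →+ ℕ => ψ.comp loc) with hR
  have hch : ∀ {φ : P →+ ℕ} (h : φ ∈ R), h.choose.comp loc = φ := fun h => h.choose_spec
  let G : Multiplicative (P →+ ℕ) →* AddMonoidAlgebra k (Pp →+ ℕ) :=
  { toFun := fun φ =>
      if h : Multiplicative.toAdd φ ∈ R then AddMonoidAlgebra.single h.choose 1 else 0
    map_one' := by
      have h0 : (Multiplicative.toAdd (1 : Multiplicative (P →+ ℕ))) ∈ R :=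
        ⟨0, by ext a; simp⟩
      dsimp only
      rw [dif_pos h0]
      have : h0.choose = 0 := hinj (by dsimp only; rw [hch h0]; ext a; simp)
      rw [this]
      rfl
    map_mul' := by
      intro φ₁ φ₂
      by_cases h1 : Multiplicative.toAdd φ₁ ∈ R
      · by_cases h2 : Multiplicative.toAdd φ₂ ∈ R
        · have h12 : Multiplicative.toAdd (φ₁ * φ₂) ∈ R := by
            refine ⟨h1.choose + h2.choose, ?_⟩
            simp only [AddMonoidHom.add_comp, hch h1, hch h2]
            rfl
          dsimp only
          rw [dif_pos h12, dif_pos h1, dif_pos h2]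
          have : h12.choose = h1.choose + h2.choose := by
            apply hinj
            dsimp only
            rw [hch h12]
            simp only [AddMonoidHom.add_comp, hch h1, hch h2]
            rfl
          rw [this, AddMonoidAlgebra.single_mul_single, mul_one]
        · have h12 : Multiplicative.toAdd (φ₁ * φ₂) ∉ R := by
            have := hidl _ h2 (Multiplicative.toAdd φ₁)
            simpa using this
          dsimp only
          rw [dif_neg h12, dif_neg h2, mul_zero]
      · have h12 : Multiplicative.toAdd (φ₁ * φ₂) ∉ R := by
          have := hidl _ h1 (Multiplicative.toAdd φ₂)
          have heq : Multiplicative.toAdd φ₂ + Multiplicative.toAdd φ₁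
              = Multiplicative.toAdd (φ₁ * φ₂) := by
            rw [add_comm]; rfl
          rwa [heq] at this
        dsimp only
        rw [dif_neg h12, dif_neg h1, zero_mul] }
  let f := AddMonoidAlgebra.lift k (AddMonoidAlgebra k (Pp →+ ℕ)) (P →+ ℕ) G
  have hfs : ∀ (φ : P →+ ℕ) (c : k), f (AddMonoidAlgebra.single φ c)
      = c • (if h : φ ∈ R then AddMonoidAlgebra.single h.choose (1 : k) else 0) := by
    intro φ c
    rw [AddMonoidAlgebra.lift_single]
    rfl
  have hψ : ∀ ψ : Pp →+ ℕ,
      f (AddMonoidAlgebra.single (ψ.comp loc) (1 : k)) = AddMonoidAlgebra.single ψ 1 := by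
    intro ψ
    have hm : ψ.comp loc ∈ R := ⟨ψ, rfl⟩
    rw [hfs, dif_pos hm, one_smul]
    congr 1
    exact hinj (by dsimp only; rw [hch hm])
  refine ⟨f, ?_, hψ, ?_⟩
  · intro y
    induction y using AddMonoidAlgebra.induction_linear with
    | zero => exact ⟨0, map_zero f⟩
    | add a b ha hb =>
      obtain ⟨x, hx⟩ := ha; obtain ⟨y', hy⟩ := hb
      exact ⟨x + y', by rw [map_add, hx, hy]⟩
    | single ψ c =>
      refine ⟨AddMonoidAlgebra.single (ψ.comp loc) c, ?_⟩
      have hm : ψ.comp loc ∈ R := ⟨ψ, rfl⟩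
      rw [hfs, dif_pos hm]
      rw [show hm.choose = ψ from hinj (by dsimp only; rw [hch hm])]
      simp [AddMonoidAlgebra.smul_single']
  · intro φ hφ
    rw [hfs, dif_neg hφ, smul_zero]
end

section
/- Let P be a fine monoid, 𝔭 ⊆ P a prime ideal with complementary face S, and P_𝔭 the sharp localization S^{-1}P/(S^{-1}P)^×. Then the localization homomorphism P → P_𝔭 is surjective, and the kernel of the induced group homomorphism P^gp → P_𝔭^gp is the subgroup S^gp generated by S. -/
/-- Let `P` be a fine monoid, `𝔭 ⊆ P` a prime ideal with complementary face `S`,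
`L = S⁻¹P` the localization (via Mathlib's universal property `AddSubmonoid.LocalizationMap`),
and `P_𝔭 = L/L^×` the sharp localization (axiomatized by the quotient map `q` with
`q a = q b ↔ a = b + u` for a unit `u`).  Then the localization homomorphism `P → P_𝔭` is
surjective, and the kernel of the induced map `P^gp → P_𝔭^gp` on groupifications is the
subgroup `S^gp` generated by `S`. -/
theorem stmt6 (P : Type*) [AddCommMonoid P]
    (hcancel : ∀ a b c : P, a + b = a + c → b = c)
    (hfg : ∃ s : Finset P, AddSubmonoid.closure (s : Set P) = ⊤)
    (𝔭 : Set P) (hideal : ∀ p : P, ∀ j ∈ 𝔭, p + j ∈ 𝔭)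
    (S : AddSubmonoid P) (hS : (S : Set P) = 𝔭ᶜ)
    (L : Type*) [AddCommMonoid L] (f : AddSubmonoid.LocalizationMap S L)
    -- `Pp` is the quotient of `L = S⁻¹P` by its group of units:
    (Pp : Type*) [AddCommMonoid Pp] (q : L →+ Pp)
    (hq_surj : Function.Surjective q)
    (hq_ker : ∀ a b : L, q a = q b ↔ ∃ u : AddUnits L, a = b + (u : L))
    -- the groupification `P^gp` of `P`:
    (Pgp : Type*) [AddCommGroup Pgp] (ιP : P →+ Pgp)
    (hιP_inj : Function.Injective ιP)
    (hιP_gen : ∀ x : Pgp, ∃ a b : P, x = ιP a - ιP b)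
    -- the groupification `P_𝔭^gp` of `P_𝔭`:
    (Ppgp : Type*) [AddCommGroup Ppgp] (ιQ : Pp →+ Ppgp)
    (hιQ_inj : Function.Injective ιQ)
    (hιQ_gen : ∀ x : Ppgp, ∃ a b : Pp, x = ιQ a - ιQ b)
    -- the induced map on groupifications:
    (g : Pgp →+ Ppgp) (hg : ∀ p : P, g (ιP p) = ιQ (q (f.toAddMonoidHom p))) :
    Function.Surjective (q.comp f.toAddMonoidHom) ∧
    {x : Pgp | g x = 0} = (AddSubgroup.closure (⇑ιP '' (S : Set P)) : Set Pgp) := by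
  -- S is a face: if a + b ∈ S then a ∈ S
  have hface : ∀ a b : P, a + b ∈ S → a ∈ S := by
    intro a b hab
    by_contra h
    have ha : a ∈ 𝔭 := by
      have := (Set.ext_iff.mp hS a).not.mp h
      simpa using this
    have hmem : a + b ∈ 𝔭 := by
      have := hideal b a ha
      rwa [add_comm] at this
    have : a + b ∉ 𝔭 := by
      have := (Set.ext_iff.mp hS (a + b)).mp hab
      simpa using this
    exact this hmem
  -- cancellation in P via eq_iff_exists
  have hfeq : ∀ a b : P, f.toAddMonoidHom a = f.toAddMonoidHom b → a = b := by
    intro a b h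
    obtain ⟨c, hc⟩ := f.eq_iff_exists.mp h
    exact hcancel c a b hc
  -- q kills elements of S
  have hqS : ∀ s : P, s ∈ S → q (f.toAddMonoidHom s) = 0 := by
    intro s hs
    obtain ⟨u, hu⟩ := f.map_addUnits ⟨s, hs⟩
    have : q (f.toAddMonoidHom (⟨s, hs⟩ : S)) = q 0 := (hq_ker _ _).mpr ⟨u, by rw [zero_add, hu]; rfl⟩
    simpa using this
  have hsurj : Function.Surjective (q.comp f.toAddMonoidHom) := by
    intro z
    obtain ⟨zp, hzp⟩ := hq_surj z
    obtain ⟨⟨a, s⟩, h⟩ := f.surj zp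
    refine ⟨a, ?_⟩
    obtain ⟨u, hu⟩ := f.map_addUnits s
    have : q (f.toAddMonoidHom a) = q zp := (hq_ker _ _).mpr ⟨u, by rw [hu]; exact h.symm⟩
    rw [← hzp]; exact this
  refine ⟨hsurj, ?_⟩
  apply Set.Subset.antisymm
  · -- kernel ⊆ closure
    intro x hx
    obtain ⟨a, b, rfl⟩ := hιP_gen x
    have hx' : g (ιP a) = g (ιP b) := by
      have h0 : g (ιP a - ιP b) = 0 := hx
      rw [map_sub, sub_eq_zero] at h0
      exact h0
    have hq' : q (f.toAddMonoidHom a) = q (f.toAddMonoidHom b) := hιQ_inj (by rw [← hg, ← hg, hx'])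
    obtain ⟨u, hu⟩ := (hq_ker _ _).mp hq'
    obtain ⟨⟨c, s₁⟩, hc⟩ := f.surj (u : L)
    obtain ⟨⟨d, s₂⟩, hd⟩ := f.surj ((-u : AddUnits L) : L)
    have hcd : f.toAddMonoidHom (c + d) = f.toAddMonoidHom (↑s₁ + ↑s₂) := by
      rw [map_add, map_add, ← (show (u : L) + f.toAddMonoidHom ↑s₁ = f.toAddMonoidHom c from hc), ← (show ((-u : AddUnits L) : L) + f.toAddMonoidHom ↑s₂ = f.toAddMonoidHom d from hd)]
      have huneg : (u : L) + ((-u : AddUnits L) : L) = 0 := by simp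
      calc ((u : L) + f.toAddMonoidHom ↑s₁) + (((-u : AddUnits L) : L) + f.toAddMonoidHom ↑s₂)
          = ((u : L) + ((-u : AddUnits L) : L)) + (f.toAddMonoidHom ↑s₁ + f.toAddMonoidHom ↑s₂) := by
            abel
        _ = f.toAddMonoidHom ↑s₁ + f.toAddMonoidHom ↑s₂ := by rw [huneg, zero_add]
    have hcd' : c + d = ↑s₁ + ↑s₂ := hfeq _ _ hcd
    have hcS : c ∈ S := hface c d (hcd' ▸ add_mem s₁.2 s₂.2)
    have hmain : f.toAddMonoidHom (a + ↑s₁) = f.toAddMonoidHom (b + c) := by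
      rw [map_add, map_add, hu, ← (show (u : L) + f.toAddMonoidHom ↑s₁ = f.toAddMonoidHom c from hc)]
      abel
    have hab : a + ↑s₁ = b + c := hfeq _ _ hmain
    have hgp : ιP a + ιP ↑s₁ = ιP b + ιP c := by rw [← map_add, ← map_add, hab]
    have hdiff : ιP a - ιP b = ιP c - ιP ↑s₁ := by
      rw [sub_eq_sub_iff_add_eq_add, hgp]
      abel
    rw [hdiff]
    exact sub_mem (AddSubgroup.subset_closure ⟨c, hcS, rfl⟩)
      (AddSubgroup.subset_closure ⟨↑s₁, s₁.2, rfl⟩)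
  · -- closure ⊆ kernel
    intro x hx
    have hsub : AddSubgroup.closure (⇑ιP '' (S : Set P)) ≤ g.ker := by
      rw [AddSubgroup.closure_le]
      rintro _ ⟨s, hs, rfl⟩
      simp only [SetLike.mem_coe, AddMonoidHom.mem_ker, hg, hqS s hs, map_zero]
    exact hsub hx
end

section
/- Let σ ⊂ N_ℝ be a full-dimensional rational polyhedral cone not containing a nontrivial linear subspace, with dual monoid P = σ^∨ ∩ M. If there exists ρ ∈ P such that the linear form ρ takes the value 1 on the primitive integral generator of every 1-dimensional face of σ, then ρ + P = interior(P), where interior(P) is the set of lattice points in the topological interior of the real cone σ^∨; moreover such ρ is unique. -/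
/-- The inclusion of integral vectors into real vectors. -/
def iVec {n : ℕ} (v : Fin n → ℤ) : Fin n → ℝ := fun i => (v i : ℝ)

/-- The pairing of an integral covector with a real vector. -/
def pairL {n : ℕ} (m : Fin n → ℤ) (x : Fin n → ℝ) : ℝ := ∑ i, (m i : ℝ) * x i

/-- `v` is a primitive integral vector. -/
def Primitive {n : ℕ} (v : Fin n → ℤ) : Prop :=
  ∀ (k : ℕ) (w : Fin n → ℤ), v = k • w → k = 1

/-- The ray `ℝ≥0·v` is a one-dimensional face of `σ`, cut out by a supporting functional. -/
def IsRayFace {n : ℕ} (σ : Set (Fin n → ℝ)) (v : Fin n → ℤ) : Prop :=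
  ∃ u : Fin n → ℝ, (∀ x ∈ σ, 0 ≤ ∑ i, u i * x i) ∧
    {x ∈ σ | ∑ i, u i * x i = 0} = {x | ∃ t : ℝ, 0 ≤ t ∧ x = t • iVec v}

namespace Stmt8X
variable {n : ℕ}

/-- real pairing -/
def pR (u x : Fin n → ℝ) : ℝ := ∑ i, u i * x i

/-- cone generated by a finite family of real vectors -/
def fgCone {ι : Type*} [Fintype ι] (w : ι → (Fin n → ℝ)) : Set (Fin n → ℝ) :=
  {x | ∃ c : ι → ℝ, (∀ i, 0 ≤ c i) ∧ x = ∑ i, c i • w i}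

/-- partial cone: sums with support in a finset J -/
def fgConeOn {ι : Type*} [Fintype ι] (w : ι → (Fin n → ℝ)) (J : Finset ι) : Set (Fin n → ℝ) :=
  {x | ∃ c : ι → ℝ, (∀ i, 0 ≤ c i) ∧ x = ∑ i ∈ J, c i • w i}

/-- cone generated by a finset of integral vectors -/
def coneOf (S : Finset (Fin n → ℤ)) : Set (Fin n → ℝ) :=
  {x | ∃ c : (Fin n → ℤ) → ℝ, (∀ g, 0 ≤ c g) ∧ x = ∑ g ∈ S, c g • iVec g}

open Finset in
lemma fgConeOn_indep_closed {ι : Type*} [Fintype ι] (w : ι → (Fin n → ℝ)) (J : Finset ι)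
    (h : LinearIndependent ℝ (fun j : J => w j)) : IsClosed (fgConeOn w J) := by
  classical
  let φ : (J → ℝ) →ₗ[ℝ] (Fin n → ℝ) :=
    { toFun := fun c => ∑ j : J, c j • w (j : ι)
      map_add' := by intro a b; simp [add_smul, Finset.sum_add_distrib]
      map_smul' := by intro t a; simp [smul_smul, Finset.smul_sum] }
  have hker : LinearMap.ker φ = ⊥ := by
    rw [LinearMap.ker_eq_bot']
    intro c hc
    have := (Fintype.linearIndependent_iff.1 h) c hc
    funext j; exact this j
  have hce : Topology.IsClosedEmbedding φ := LinearMap.isClosedEmbedding_of_injective hker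
  have himg : fgConeOn w J = φ '' {c : J → ℝ | ∀ j, 0 ≤ c j} := by
    ext x
    constructor
    · rintro ⟨c, hc, rfl⟩
      refine ⟨fun j => c j, fun j => hc j, ?_⟩
      show ∑ j : J, c j • w (j : ι) = ∑ i ∈ J, c i • w i
      exact Finset.sum_attach J (fun i => c i • w i)
    · rintro ⟨c, hc, rfl⟩
      refine ⟨fun i => if h : i ∈ J then c ⟨i, h⟩ else 0, ?_, ?_⟩
      · intro i; by_cases h : i ∈ J <;> simp [h]; exact hc _
      · show ∑ j : J, c j • w (j : ι) = _
        rw [← Finset.sum_attach J (fun i => (if h : i ∈ J then c ⟨i, h⟩ else 0) • w i)]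
        exact Finset.sum_congr rfl fun j _ => by simp
  rw [himg]
  have horth : IsClosed {c : J → ℝ | ∀ j, 0 ≤ c j} := by
    have : {c : J → ℝ | ∀ j, 0 ≤ c j} = ⋂ j, {c : J → ℝ | 0 ≤ c j} := by
      ext c; simp [Set.mem_iInter]
    rw [this]
    exact isClosed_iInter fun j => isClosed_le continuous_const (continuous_apply j)
  exact hce.isClosedMap _ horth


lemma caratheodory_step {ι : Type*} [Fintype ι] [DecidableEq ι] (w : ι → (Fin n → ℝ))
    (J : Finset ι)
    (hdep : ¬ LinearIndependent ℝ (fun j : J => w j)) {x : Fin n → ℝ}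
    (hx : x ∈ fgConeOn w J) : ∃ j₀ ∈ J, x ∈ fgConeOn w (J.erase j₀) := by
  classical
  obtain ⟨c, hc, rfl⟩ := hx
  obtain ⟨d0, hd0sum, j1, hj1⟩ := Fintype.not_linearIndependent_iff.1 hdep
  have key : ∀ d : ι → ℝ, (∑ i ∈ J, d i • w i = 0) → (∃ j ∈ J, 0 < d j) →
      ∃ j₀ ∈ J, (∑ i ∈ J, c i • w i) ∈ fgConeOn w (J.erase j₀) := by
    rintro d hdsum ⟨j2, hj2J, hj2⟩
    set T := J.filter (fun j => 0 < d j) with hT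
    have hTne : T.Nonempty := ⟨j2, Finset.mem_filter.2 ⟨hj2J, hj2⟩⟩
    obtain ⟨j₀, hj₀T, hj₀min⟩ := Finset.exists_min_image T (fun j => c j / d j) hTne
    have hj₀J : j₀ ∈ J := (Finset.mem_filter.1 hj₀T).1
    have hdj₀ : 0 < d j₀ := (Finset.mem_filter.1 hj₀T).2
    set t := c j₀ / d j₀ with ht
    have htd : t * d j₀ = c j₀ := div_mul_cancel₀ _ hdj₀.ne'
    have ht0 : 0 ≤ t := div_nonneg (hc j₀) hdj₀.le
    have hnn : ∀ i ∈ J, 0 ≤ c i - t * d i := by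
      intro i hiJ
      by_cases hiT : i ∈ T
      · have hdi : 0 < d i := (Finset.mem_filter.1 hiT).2
        have h2 := hj₀min i hiT
        rw [ht, div_le_div_iff₀ hdj₀ hdi] at h2
        have h3 : t * d i ≤ c i := by
          rw [ht]
          rw [div_mul_eq_mul_div, div_le_iff₀ hdj₀]
          linarith [h2]
        linarith
      · have hdi : d i ≤ 0 := by
          by_contra hpos
          exact hiT (Finset.mem_filter.2 ⟨hiJ, lt_of_not_ge hpos⟩)
        nlinarith [hc i]
    refine ⟨j₀, hj₀J, ⟨fun i => if i ∈ J.erase j₀ then c i - t * d i else 0, ?_, ?_⟩⟩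
    · intro i
      by_cases h : i ∈ J.erase j₀
      · simpa [h] using hnn i (Finset.mem_of_mem_erase h)
      · simp [h]
    · have e1 : ∑ i ∈ J, c i • w i = ∑ i ∈ J, (c i - t * d i) • w i := by
        simp only [sub_smul]
        rw [Finset.sum_sub_distrib]
        have : ∑ i ∈ J, (t * d i) • w i = t • ∑ i ∈ J, d i • w i := by
          rw [Finset.smul_sum]
          exact Finset.sum_congr rfl fun i _ => by rw [smul_smul]
        rw [this, hdsum, smul_zero, sub_zero]
      have e2 : ∑ i ∈ J, (c i - t * d i) • w i
          = ∑ i ∈ J.erase j₀, (c i - t * d i) • w i := by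
        rw [← Finset.add_sum_erase J _ hj₀J]
        have : c j₀ - t * d j₀ = 0 := by linarith [htd]
        rw [this, zero_smul, zero_add]
      rw [e1, e2]
      exact (Finset.sum_congr rfl fun i hi => by simp [hi]).symm
  by_cases hsign : 0 < d0 j1
  · apply key (fun i => if h : i ∈ J then d0 ⟨i, h⟩ else 0)
    · rw [← Finset.sum_attach J (fun i => (if h : i ∈ J then d0 ⟨i, h⟩ else 0) • w i)]
      rw [← hd0sum]
      exact Finset.sum_congr rfl fun j _ => by simp
    · exact ⟨j1, j1.2, by simp [j1.2, hsign]⟩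
  · have hneg : 0 < -(d0 j1) := by
      rcases lt_trichotomy (d0 j1) 0 with h | h | h
      · linarith
      · exact absurd h hj1
      · exact absurd h hsign
    apply key (fun i => if h : i ∈ J then -(d0 ⟨i, h⟩) else 0)
    · rw [← Finset.sum_attach J (fun i => (if h : i ∈ J then -(d0 ⟨i, h⟩) else 0) • w i)]
      have : ∑ j : J, (-(d0 j)) • w (j : ι) = -∑ j : J, d0 j • w (j : ι) := by
        rw [← Finset.sum_neg_distrib]
        exact Finset.sum_congr rfl fun j _ => by rw [neg_smul]
      rw [show (fun j : J => (if h : (j:ι) ∈ J then -(d0 ⟨j, h⟩) else 0) • w (j:ι))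
            = fun j : J => (-(d0 j)) • w (j:ι) from funext fun j => by simp]
      show ∑ j : {x // x ∈ J}, (-(d0 j)) • w (j:ι) = 0
      rw [this, hd0sum, neg_zero]
    · exact ⟨j1, j1.2, by simp [j1.2, hneg]⟩

lemma fgConeOn_subset_fgCone {ι : Type*} [Fintype ι] (w : ι → (Fin n → ℝ)) (J : Finset ι) :
    fgConeOn w J ⊆ fgCone w := by
  classical
  rintro x ⟨c, hc, rfl⟩
  refine ⟨fun i => if i ∈ J then c i else 0, fun i => by by_cases h : i ∈ J <;> simp [h, hc i], ?_⟩
  rw [← Finset.sum_subset (Finset.subset_univ J) (fun i _ hi => by simp [hi])]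
  exact Finset.sum_congr rfl fun i hi => by simp [hi]

lemma isClosed_fgCone {ι : Type*} [Fintype ι] (w : ι → (Fin n → ℝ)) : IsClosed (fgCone w) := by
  classical
  have subsume : ∀ J : Finset ι, ∀ x ∈ fgConeOn w J,
      ∃ K, K ⊆ J ∧ LinearIndependent ℝ (fun j : K => w j) ∧ x ∈ fgConeOn w K := by
    intro J
    induction J using Finset.strongInduction with
    | _ J ih =>
      intro x hx
      by_cases h : LinearIndependent ℝ (fun j : J => w j)
      · exact ⟨J, subset_rfl, h, hx⟩
      · obtain ⟨j₀, hj₀, hx'⟩ := caratheodory_step w J h hx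
        obtain ⟨K, hK, hind, hxK⟩ := ih (J.erase j₀) (Finset.erase_ssubset hj₀) x hx'
        exact ⟨K, hK.trans (Finset.erase_subset _ _), hind, hxK⟩
  have cover : fgCone w =
      ⋃ K ∈ {K : Finset ι | LinearIndependent ℝ (fun j : K => w j)}, fgConeOn w K := by
    apply Set.Subset.antisymm
    · intro x hx
      obtain ⟨K, _, hind, hxK⟩ := subsume Finset.univ x hx
      exact Set.mem_biUnion hind hxK
    · refine Set.iUnion₂_subset fun K _ => fgConeOn_subset_fgCone w K
  rw [cover]
  exact Set.Finite.isClosed_biUnion (Set.toFinite _)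
    (fun K hK => fgConeOn_indep_closed w K hK)

lemma fgCone_zero {ι : Type*} [Fintype ι] (w : ι → (Fin n → ℝ)) : (0 : Fin n → ℝ) ∈ fgCone w :=
  ⟨0, fun i => le_rfl, by simp⟩

lemma fgCone_smul {ι : Type*} [Fintype ι] (w : ι → (Fin n → ℝ)) {t : ℝ} (ht : 0 ≤ t)
    {x : Fin n → ℝ} (hx : x ∈ fgCone w) : t • x ∈ fgCone w := by
  obtain ⟨c, hc, rfl⟩ := hx
  refine ⟨fun i => t * c i, fun i => mul_nonneg ht (hc i), ?_⟩
  rw [Finset.smul_sum]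
  exact Finset.sum_congr rfl fun i _ => by dsimp only; rw [smul_smul]

lemma fgCone_convex {ι : Type*} [Fintype ι] (w : ι → (Fin n → ℝ)) : Convex ℝ (fgCone w) := by
  rintro x ⟨c, hc, rfl⟩ y ⟨d, hd, rfl⟩ a b ha hb hab
  refine ⟨fun i => a * c i + b * d i,
    fun i => add_nonneg (mul_nonneg ha (hc i)) (mul_nonneg hb (hd i)), ?_⟩
  have h1 : a • ∑ i, c i • w i = ∑ i, (a * c i) • w i := by
    rw [Finset.smul_sum]; exact Finset.sum_congr rfl fun i _ => smul_smul a (c i) (w i)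
  have h2 : b • ∑ i, d i • w i = ∑ i, (b * d i) • w i := by
    rw [Finset.smul_sum]; exact Finset.sum_congr rfl fun i _ => smul_smul b (d i) (w i)
  rw [h1, h2, ← Finset.sum_add_distrib]
  exact Finset.sum_congr rfl fun i _ => by dsimp only; rw [add_smul]

/-- Separation of a point from a closed finitely generated cone. -/
lemma sep {ι : Type*} [Fintype ι] (w : ι → (Fin n → ℝ)) (b : Fin n → ℝ)
    (hb : b ∉ fgCone w) :
    ∃ u : Fin n → ℝ, (∀ x ∈ fgCone w, 0 ≤ pR u x) ∧ pR u b < 0 := by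
  obtain ⟨f, s, hfC, hfb⟩ :=
    geometric_hahn_banach_closed_point (fgCone_convex w) (isClosed_fgCone w) hb
  have hs0 : 0 < s := by
    have := hfC 0 (fgCone_zero w)
    simpa using this
  have hfle : ∀ x ∈ fgCone w, f x ≤ 0 := by
    intro x hx
    by_contra hpos
    push_neg at hpos
    have ht : (0:ℝ) ≤ (s + 1) / f x := div_nonneg (by linarith) hpos.le
    have := hfC _ (fgCone_smul w ht hx)
    rw [map_smul, smul_eq_mul, div_mul_cancel₀ _ hpos.ne'] at this
    linarith
  refine ⟨fun i => -(f ((fun j => if i = j then (1:ℝ) else 0))), ?_, ?_⟩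
  · intro x hx
    have hfx : f x = ∑ i, x i * f ((fun j => if i = j then (1:ℝ) else 0)) := by
      conv_lhs => rw [pi_eq_sum_univ x, map_sum]
      exact Finset.sum_congr rfl fun i _ => by rw [map_smul, smul_eq_mul]
    have : pR (fun i => -(f ((fun j => if i = j then (1:ℝ) else 0)))) x = -f x := by
      rw [hfx, ← Finset.sum_neg_distrib]
      exact Finset.sum_congr rfl fun i _ => by ring
    rw [this]
    linarith [hfle x hx]
  · have hfx : f b = ∑ i, b i * f ((fun j => if i = j then (1:ℝ) else 0)) := by
      conv_lhs => rw [pi_eq_sum_univ b, map_sum]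
      exact Finset.sum_congr rfl fun i _ => by rw [map_smul, smul_eq_mul]
    have : pR (fun i => -(f ((fun j => if i = j then (1:ℝ) else 0)))) b = -f b := by
      rw [hfx, ← Finset.sum_neg_distrib]
      exact Finset.sum_congr rfl fun i _ => by ring
    rw [this]
    linarith

lemma iVec_eq_zero {v : Fin n → ℤ} (h : iVec v = 0) : v = 0 := by
  funext i
  have : iVec v i = 0 := by rw [h]; rfl
  simpa [iVec] using this

lemma mem_coneOf {S : Finset (Fin n → ℤ)} {g : Fin n → ℤ} (hg : g ∈ S) :
    iVec g ∈ coneOf S := by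
  classical
  refine ⟨fun h => if h = g then 1 else 0, fun h => by positivity, ?_⟩
  have : ∀ h ∈ S, (if h = g then (1:ℝ) else 0) • iVec h
      = if h = g then iVec g else 0 := by
    intro h _
    by_cases hh : h = g <;> simp [hh]
  rw [Finset.sum_congr rfl this, Finset.sum_ite_eq' S g (fun _ => iVec g)]
  simp [hg]

lemma coneOf_zero (S : Finset (Fin n → ℤ)) : (0 : Fin n → ℝ) ∈ coneOf S :=
  ⟨0, fun g => le_rfl, by simp⟩

lemma coneOf_add {S : Finset (Fin n → ℤ)} {x y : Fin n → ℝ}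
    (hx : x ∈ coneOf S) (hy : y ∈ coneOf S) : x + y ∈ coneOf S := by
  obtain ⟨c, hc, rfl⟩ := hx
  obtain ⟨d, hd, rfl⟩ := hy
  refine ⟨fun g => c g + d g, fun g => add_nonneg (hc g) (hd g), ?_⟩
  rw [← Finset.sum_add_distrib]
  exact Finset.sum_congr rfl fun g _ => by dsimp only; rw [add_smul]

lemma coneOf_smul {S : Finset (Fin n → ℤ)} {t : ℝ} (ht : 0 ≤ t) {x : Fin n → ℝ}
    (hx : x ∈ coneOf S) : t • x ∈ coneOf S := by
  obtain ⟨c, hc, rfl⟩ := hx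
  refine ⟨fun g => t * c g, fun g => mul_nonneg ht (hc g), ?_⟩
  rw [Finset.smul_sum]
  exact Finset.sum_congr rfl fun g _ => by dsimp only; rw [smul_smul]

lemma coneOf_mono {S T : Finset (Fin n → ℤ)} (hST : S ⊆ T) : coneOf S ⊆ coneOf T := by
  classical
  rintro x ⟨c, hc, rfl⟩
  refine ⟨fun g => if g ∈ S then c g else 0,
    fun g => by by_cases h : g ∈ S <;> simp [h, hc g], ?_⟩
  rw [← Finset.sum_subset hST (fun g _ hg => by simp [hg])]
  exact Finset.sum_congr rfl fun g hg => by simp [hg]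

lemma sum_smul_mem {σ : Set (Fin n → ℝ)} {S : Finset (Fin n → ℤ)} (hσc : σ = coneOf S)
    (V : Finset (Fin n → ℤ)) (hV : ∀ v ∈ V, iVec v ∈ σ) (c : (Fin n → ℤ) → ℝ)
    (hc : ∀ v, 0 ≤ c v) : ∑ v ∈ V, c v • iVec v ∈ σ := by
  classical
  induction V using Finset.induction with
  | empty => rw [Finset.sum_empty, hσc]; exact coneOf_zero S
  | insert _ _ hnotmem ih =>
    rename_i a V'
    rw [Finset.sum_insert hnotmem, hσc]
    refine coneOf_add ?_ ?_
    · exact coneOf_smul (hc a) (hσc ▸ hV a (Finset.mem_insert_self a V'))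
    · have := ih (fun v hv => hV v (Finset.mem_insert_of_mem hv))
      rwa [hσc] at this

/-- primitivization of a nonzero integral vector -/
lemma primitivize {g : Fin n → ℤ} (hg : g ≠ 0) :
    ∃ (v : Fin n → ℤ) (d : ℕ), 0 < d ∧ (∀ i, g i = (d : ℤ) * v i) ∧ Primitive v := by
  classical
  set d := Finset.univ.gcd (fun i => (g i).natAbs) with hd
  have hd0 : d ≠ 0 := by
    intro h0
    apply hg
    funext i
    have := Finset.gcd_eq_zero_iff.1 (hd ▸ h0) i (Finset.mem_univ i)
    simpa [Int.natAbs_eq_zero] using this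
  have hdvd : ∀ i, (d : ℤ) ∣ g i := by
    intro i
    have h1 : d ∣ (g i).natAbs := Finset.gcd_dvd (Finset.mem_univ i)
    have h2 : ((d:ℤ)).natAbs ∣ (g i).natAbs := by simpa using h1
    exact Int.natAbs_dvd_natAbs.1 h2
  refine ⟨fun i => g i / d, d, Nat.pos_of_ne_zero hd0, fun i => (Int.mul_ediv_cancel' (hdvd i)).symm, ?_⟩
  intro k w hvw
  have hk0 : k ≠ 0 := by
    intro hk
    apply hg
    funext i
    have h1 := congrFun hvw i
    rw [hk] at h1
    simp only [Pi.smul_apply, smul_eq_mul, Nat.cast_zero, zero_smul, zero_mul] at h1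
    have h2 : g i = (d:ℤ) * (g i / d) := (Int.mul_ediv_cancel' (hdvd i)).symm
    rw [show g i / (d:ℤ) = 0 from h1] at h2
    simpa using h2
  have hdk : ∀ i, ((d * k : ℕ) : ℤ) ∣ g i := by
    intro i
    have h1 := congrFun hvw i
    simp only [Pi.smul_apply, smul_eq_mul, Int.natCast_mul] at h1 ⊢
    have h2 : g i = (d:ℤ) * (g i / d) := (Int.mul_ediv_cancel' (hdvd i)).symm
    rw [h1] at h2
    exact ⟨w i, by rw [h2]; push_cast; ring⟩
  have hdkd : d * k ∣ d := by
    apply Finset.dvd_gcd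
    intro i _
    have h3 := hdk i
    have h4 : ((d*k:ℕ):ℤ).natAbs ∣ (g i).natAbs := Int.natAbs_dvd_natAbs.2 h3
    rwa [Int.natAbs_natCast] at h4
  have hdpos : 0 < d := Nat.pos_of_ne_zero hd0
  have hle : d * k ≤ d := Nat.le_of_dvd hdpos hdkd
  have hk1 : k ≤ 1 := by
    by_contra hk1
    push_neg at hk1
    nlinarith
  omega

lemma pR_add_right (u x y : Fin n → ℝ) : pR u (x + y) = pR u x + pR u y := by
  simp [pR, mul_add, Finset.sum_add_distrib]

lemma pR_smul_right (u : Fin n → ℝ) (t : ℝ) (x : Fin n → ℝ) : pR u (t • x) = t * pR u x := by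
  simp only [pR, Finset.mul_sum, Pi.smul_apply, smul_eq_mul]; exact Finset.sum_congr rfl fun i _ => by ring



/-- cone generated by a finite family of vectors -/

lemma pR_neg_right (u x : Fin n → ℝ) : pR u (-x) = -pR u x := by
  simp [pR, mul_neg]

lemma pR_sum_right {ι : Type*} (u : Fin n → ℝ) (s : Finset ι) (f : ι → (Fin n → ℝ)) :
    pR u (∑ i ∈ s, f i) = ∑ i ∈ s, pR u (f i) := by
  classical
  induction s using Finset.induction with
  | empty => simp [pR]
  | insert _ _ h ih => rw [Finset.sum_insert h, pR_add_right, ih, Finset.sum_insert h]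

lemma pR_add_left (u v x : Fin n → ℝ) : pR (u + v) x = pR u x + pR v x := by
  simp [pR, add_mul, Finset.sum_add_distrib]

lemma pR_sum_left {ι : Type*} (s : Finset ι) (f : ι → (Fin n → ℝ)) (x : Fin n → ℝ) :
    pR (∑ i ∈ s, f i) x = ∑ i ∈ s, pR (f i) x := by
  classical
  induction s using Finset.induction with
  | empty => simp [pR]
  | insert _ _ h ih => rw [Finset.sum_insert h, pR_add_left, ih, Finset.sum_insert h]

lemma coneOf_eq_fgCone (S : Finset (Fin n → ℤ)) :
    coneOf S = fgCone (fun s : {g // g ∈ S} => iVec (s : Fin n → ℤ)) := by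
  classical
  ext x
  constructor
  · rintro ⟨c, hc, rfl⟩
    refine ⟨fun s => c ↑s, fun s => hc _, ?_⟩
    show _ = ∑ s ∈ S.attach, c ↑s • iVec (↑s : Fin n → ℤ)
    rw [Finset.sum_attach S (fun g => c g • iVec g)]
  · rintro ⟨c, hc, rfl⟩
    refine ⟨fun g => if h : g ∈ S then c ⟨g, h⟩ else 0,
      fun g => by by_cases h : g ∈ S <;> simp [h, hc _], ?_⟩
    show ∑ s ∈ S.attach, c s • iVec (↑s : Fin n → ℤ) = _
    rw [← Finset.sum_attach S (fun g => (if h : g ∈ S then c ⟨g, h⟩ else 0) • iVec g)]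
    exact Finset.sum_congr rfl fun s _ => by simp

theorem main_struct (σ : Set (Fin n → ℝ)) (gens : Finset (Fin n → ℤ))
    (hσc : σ = coneOf gens)
    (hline : ∀ x ∈ σ, -x ∈ σ → x = 0) :
    ∃ V : Finset (Fin n → ℤ),
      (∀ v ∈ V, iVec v ∈ σ ∧ Primitive v ∧ IsRayFace σ v) ∧ σ = coneOf V := by
  classical
  obtain ⟨S, hSmem, hSmin⟩ := Finset.exists_min_image
      ((gens.powerset).filter (fun S => coneOf S = σ)) Finset.card
      ⟨gens, by simp [Finset.mem_filter, hσc.symm]⟩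
  rw [Finset.mem_filter, Finset.mem_powerset] at hSmem
  obtain ⟨hSsub, hS⟩ := hSmem
  have hmin' : ∀ T ⊆ gens, coneOf T = σ → S.card ≤ T.card := by
    intro T h1 h2
    exact hSmin T (Finset.mem_filter.2 ⟨Finset.mem_powerset.2 h1, h2⟩)
  have hnotin : ∀ g ∈ S, iVec g ∉ coneOf (S.erase g) := by
    intro g hg hcon
    have hsub2 : coneOf S ⊆ coneOf (S.erase g) := by
      rintro x ⟨c, hc, rfl⟩
      rw [← Finset.add_sum_erase S _ hg]
      exact coneOf_add (coneOf_smul (hc g) hcon) ⟨c, hc, rfl⟩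
    have heq : coneOf (S.erase g) = σ :=
      subset_antisymm (hS ▸ coneOf_mono (Finset.erase_subset g S)) (hS ▸ hsub2)
    have hcard2 := hmin' (S.erase g) ((Finset.erase_subset g S).trans hSsub) heq
    have hcard := Finset.card_erase_of_mem hg
    have hpos : 0 < S.card := Finset.card_pos.2 ⟨g, hg⟩
    omega
  have hne0 : ∀ g ∈ S, g ≠ 0 := by
    intro g hg h0
    apply hnotin g hg
    have h1 : iVec g = 0 := by rw [h0]; funext i; simp [iVec]
    rw [h1]
    exact coneOf_zero _
  have hmemσ : ∀ g ∈ S, iVec g ∈ σ := fun g hg => hS ▸ mem_coneOf hg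
  -- face property of each generator's ray
  have hface : ∀ g ∈ S, ∀ a b : Fin n → ℝ, a ∈ σ → b ∈ σ → ∀ t : ℝ,
      a + b = t • iVec g → ∃ r : ℝ, 0 ≤ r ∧ b = r • iVec g := by
    intro g hg a b ha hb t habt
    rw [← hS] at ha hb
    obtain ⟨c, hc, rfl⟩ := ha
    obtain ⟨d, hd, rfl⟩ := hb
    set β := t - (c g + d g) with hβ
    have hsum2 : ∑ h ∈ S, (c h + d h) • iVec h = t • iVec g := by
      rw [← habt, ← Finset.sum_add_distrib]
      exact Finset.sum_congr rfl fun h _ => by rw [add_smul]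
    have hz : ∑ h ∈ S.erase g, (c h + d h) • iVec h = β • iVec g := by
      rw [← Finset.add_sum_erase S _ hg] at hsum2
      have : ∑ h ∈ S.erase g, (c h + d h) • iVec h = t • iVec g - (c g + d g) • iVec g := by
        rw [← hsum2]; abel
      rw [this, hβ, sub_smul]
    have hzmem : ∑ h ∈ S.erase g, (c h + d h) • iVec h ∈ coneOf (S.erase g) :=
      ⟨fun h => c h + d h, fun h => add_nonneg (hc h) (hd h), rfl⟩
    rcases lt_trichotomy β 0 with hb1 | hb1 | hb1
    · exfalso
      have hzσ : (β • iVec g) ∈ σ := hS ▸ (coneOf_mono (Finset.erase_subset g S) (hz ▸ hzmem))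
      have hnegσ : -(β • iVec g) ∈ σ := by
        have : -(β • iVec g) = (-β) • iVec g := by rw [neg_smul]
        rw [this, ← hS]
        exact coneOf_smul (by linarith) (hS.symm ▸ hmemσ g hg)
      have h0 := hline _ hzσ hnegσ
      have : iVec g = 0 := by
        rcases smul_eq_zero.1 h0 with h | h
        · exact absurd h (ne_of_lt hb1)
        · exact h
      exact hne0 g hg (iVec_eq_zero this)
    · -- β = 0 : both pieces vanish
      have hz0 : ∑ h ∈ S.erase g, (c h + d h) • iVec h = 0 := by rw [hz, hb1, zero_smul]
      have hsplit : (∑ h ∈ S.erase g, c h • iVec h) + (∑ h ∈ S.erase g, d h • iVec h) = 0 := by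
        rw [← hz0, ← Finset.sum_add_distrib]
        exact Finset.sum_congr rfl fun h _ => by rw [add_smul]
      have hpσ : (∑ h ∈ S.erase g, c h • iVec h) ∈ σ :=
        hS ▸ (coneOf_mono (Finset.erase_subset g S) ⟨c, hc, rfl⟩)
      have hqσ : (∑ h ∈ S.erase g, d h • iVec h) ∈ σ :=
        hS ▸ (coneOf_mono (Finset.erase_subset g S) ⟨d, hd, rfl⟩)
      have hp0 := hline _ hpσ (by rw [show -(∑ h ∈ S.erase g, c h • iVec h)
        = ∑ h ∈ S.erase g, d h • iVec h from by
          rw [neg_eq_iff_add_eq_zero]; exact hsplit]; exact hqσ)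
      have hq0 : ∑ h ∈ S.erase g, d h • iVec h = 0 := by
        rw [hp0, zero_add] at hsplit; exact hsplit
      refine ⟨d g, hd g, ?_⟩
      rw [← Finset.add_sum_erase S _ hg, hq0, add_zero]
    · exfalso
      apply hnotin g hg
      have : iVec g = β⁻¹ • ∑ h ∈ S.erase g, (c h + d h) • iVec h := by
        rw [hz, smul_smul, inv_mul_cancel₀ (ne_of_gt hb1), one_smul]
      rw [this]
      exact coneOf_smul (by positivity) hzmem
  -- no two distinct elements of S are parallel
  have hpar : ∀ g ∈ S, ∀ h ∈ S, h ≠ g → ∀ r : ℝ, 0 ≤ r → iVec h ≠ r • iVec g := by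
    intro g hg h hh hgh r hr0 hr
    rcases eq_or_lt_of_le hr0 with h0 | h0
    · apply hne0 h hh
      apply iVec_eq_zero
      rw [hr, ← h0, zero_smul]
    · apply hnotin h hh
      rw [hr]
      exact coneOf_smul hr0 (mem_coneOf (Finset.mem_erase.2 ⟨Ne.symm hgh, hg⟩))
  -- primitivize each generator
  have hprim : ∀ g : {g // g ∈ S}, ∃ (v : Fin n → ℤ) (dd : ℕ),
      0 < dd ∧ (∀ i, (g : Fin n → ℤ) i = (dd : ℤ) * v i) ∧ Primitive v :=
    fun g => primitivize (hne0 g g.2)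
  choose v dd hddpos hgd hvprim using hprim
  have hscale : ∀ g : {g // g ∈ S}, iVec (g : Fin n → ℤ) = (dd g : ℝ) • iVec (v g) := by
    intro g
    funext i
    have := hgd g i
    simp only [iVec, Pi.smul_apply, smul_eq_mul]
    rw [this]
    push_cast
    ring
  have hvσ : ∀ g : {g // g ∈ S}, iVec (v g) ∈ σ := by
    intro g
    have h1 : iVec (v g) = ((dd g : ℝ))⁻¹ • iVec (g : Fin n → ℤ) := by
      have hddne : ((dd g : ℝ)) ≠ 0 := by
        have := hddpos g
        positivity
      rw [hscale g, smul_smul, inv_mul_cancel₀ hddne, one_smul]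
    rw [h1, ← hS]
    exact coneOf_smul (by positivity) (hS.symm ▸ hmemσ _ g.2)
  -- exposing functionals
  have step1 : ∀ g : {g // g ∈ S}, ∀ h ∈ S.erase (g : Fin n → ℤ),
      ∃ u : Fin n → ℝ, (∀ x ∈ σ, 0 ≤ pR u x) ∧ pR u (iVec (g : Fin n → ℤ)) = 0 ∧
        0 < pR u (iVec h) := by
    intro g h hh
    set g₀ := (g : Fin n → ℤ) with hg₀
    set w : Option {s // s ∈ S} → (Fin n → ℝ) :=
      fun o => Option.elim o (-(iVec g₀)) (fun s => iVec (s : Fin n → ℤ)) with hw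
    have hσw : σ ⊆ fgCone w := by
      intro x hx
      rw [← hS, coneOf_eq_fgCone] at hx
      obtain ⟨c, hc, rfl⟩ := hx
      refine ⟨fun o => Option.elim o 0 c, fun o => by cases o <;> simp [hc _], ?_⟩
      rw [Fintype.sum_option]
      simp [hw]
    have hgw : -(iVec g₀) ∈ fgCone w := by
      refine ⟨fun o => Option.elim o 1 0, fun o => by cases o <;> simp, ?_⟩
      rw [Fintype.sum_option]
      simp [hw]
    have hbnot : -(iVec h) ∉ fgCone w := by
      rintro ⟨c, hc, hsum⟩
      rw [Fintype.sum_option] at hsum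
      set sstar := ∑ s : {s // s ∈ S}, c (some s) • iVec (s : Fin n → ℤ) with hsstar
      have hsσ : sstar ∈ σ := by
        rw [← hS, coneOf_eq_fgCone]
        exact ⟨fun s => c (some s), fun s => hc _, rfl⟩
      have heq : sstar + iVec h = c none • iVec g₀ := by
        have h1 : -(iVec h) = c none • (-(iVec g₀)) + sstar := by
          rw [hsum]; rfl
        rw [smul_neg] at h1
        have := congrArg (fun z => z + iVec h + c none • iVec g₀) h1
        funext i
        have h2 := congrFun h1 i
        simp only [Pi.add_apply, Pi.neg_apply, Pi.smul_apply, smul_eq_mul] at h2 ⊢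
        linarith
      obtain ⟨r, hr0, hreq⟩ := hface g₀ g.2 sstar (iVec h) hsσ
        (hmemσ h (Finset.mem_of_mem_erase hh)) (c none) heq
      exact hpar g₀ g.2 h (Finset.mem_of_mem_erase hh) (Finset.ne_of_mem_erase hh) r hr0 hreq
    obtain ⟨u, hu1, hu2⟩ := sep w (-(iVec h)) hbnot
    refine ⟨u, fun x hx => hu1 x (hσw hx), ?_, ?_⟩
    · have h1 : 0 ≤ pR u (iVec g₀) := hu1 _ (hσw (hmemσ g₀ g.2))
      have h2 : 0 ≤ pR u (-(iVec g₀)) := hu1 _ hgw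
      rw [pR_neg_right] at h2
      linarith
    · rw [pR_neg_right] at hu2
      linarith
  -- assemble exposing functional for each g and prove IsRayFace
  have hray : ∀ g : {g // g ∈ S}, IsRayFace σ (v g) := by
    intro g
    set g₀ := (g : Fin n → ℤ) with hg₀
    have step1' : ∀ h : {h // h ∈ S.erase g₀}, ∃ u : Fin n → ℝ,
        (∀ x ∈ σ, 0 ≤ pR u x) ∧ pR u (iVec g₀) = 0 ∧ 0 < pR u (iVec (h : Fin n → ℤ)) :=
      fun h => step1 g h h.2
    choose U hU1 hU2 hU3 using step1'
    set u : Fin n → ℝ := ∑ h : {h // h ∈ S.erase g₀}, U h with hu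
    have hupos : ∀ x ∈ σ, 0 ≤ pR u x := by
      intro x hx
      rw [hu, pR_sum_left]
      exact Finset.sum_nonneg fun h _ => hU1 h x hx
    have hug : pR u (iVec g₀) = 0 := by
      rw [hu, pR_sum_left]
      exact Finset.sum_eq_zero fun h _ => hU2 h
    have huh : ∀ h : {h // h ∈ S.erase g₀}, 0 < pR u (iVec (h : Fin n → ℤ)) := by
      intro h
      rw [hu, pR_sum_left]
      have hle : pR (U h) (iVec (h : Fin n → ℤ)) ≤
          ∑ h' : {h // h ∈ S.erase g₀}, pR (U h') (iVec (h : Fin n → ℤ)) := by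
        apply Finset.single_le_sum (f := fun h' => pR (U h') (iVec (h : Fin n → ℤ)))
          (fun h' _ => hU1 h' _ (hmemσ _ (Finset.mem_of_mem_erase h.2))) (Finset.mem_univ h)
      linarith [hU3 h]
    have huv : pR u (iVec (v g)) = 0 := by
      have h1 : pR u (iVec g₀) = (dd g : ℝ) * pR u (iVec (v g)) := by
        rw [hscale g, pR_smul_right]
      have hddne : ((dd g : ℕ) : ℝ) ≠ 0 := by
        have := hddpos g; positivity
      rw [hug] at h1
      have := h1.symm
      rcases mul_eq_zero.1 this with h2 | h2
      · exact absurd h2 hddne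
      · exact h2
    refine ⟨u, ?_, ?_⟩
    · intro x hx
      exact hupos x hx
    · ext x
      simp only [Set.mem_setOf_eq]
      constructor
      · rintro ⟨hxσ, hx0⟩
        have hx0' : pR u x = 0 := hx0
        rw [← hS] at hxσ
        obtain ⟨c, hc, rfl⟩ := hxσ
        have hsumval : pR u (∑ h ∈ S, c h • iVec h) = ∑ h ∈ S, c h * pR u (iVec h) := by
          rw [pR_sum_right]
          exact Finset.sum_congr rfl fun h _ => pR_smul_right u (c h) (iVec h)
        rw [hsumval] at hx0'
        have hterms : ∀ h ∈ S, 0 ≤ c h * pR u (iVec h) :=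
          fun h hh => mul_nonneg (hc h) (hupos _ (hmemσ h hh))
        have hzero : ∀ h ∈ S, c h * pR u (iVec h) = 0 :=
          (Finset.sum_eq_zero_iff_of_nonneg hterms).1 hx0'
        have hcz : ∀ h ∈ S.erase g₀, c h = 0 := by
          intro h hh
          have h1 := hzero h (Finset.mem_of_mem_erase hh)
          have h2 := huh ⟨h, hh⟩
          rcases mul_eq_zero.1 h1 with h3 | h3
          · exact h3
          · exact absurd h3 (ne_of_gt h2)
        have hxeq : ∑ h ∈ S, c h • iVec h = c g₀ • iVec g₀ := by
          rw [← Finset.add_sum_erase S _ g.2]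
          rw [Finset.sum_eq_zero (fun h hh => by rw [hcz h hh, zero_smul]), add_zero]
        refine ⟨c g₀ * (dd g : ℝ), mul_nonneg (hc g₀) (by positivity), ?_⟩
        rw [hxeq, hscale g, smul_smul]
      · rintro ⟨t, ht0, rfl⟩
        constructor
        · rw [← hS]
          exact coneOf_smul ht0 (hS.symm ▸ hvσ g)
        · show pR u (t • iVec (v g)) = 0
          rw [pR_smul_right, huv, mul_zero]
  -- assemble V
  have hinj : ∀ g1 ∈ S.attach, ∀ g2 ∈ S.attach, v g1 = v g2 → g1 = g2 := by
    intro g1 _ g2 _ hv12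
    by_contra hne
    have hne' : (g1 : Fin n → ℤ) ≠ (g2 : Fin n → ℤ) := fun h => hne (Subtype.ext h)
    have h1 : iVec (g1 : Fin n → ℤ) = (dd g1 : ℝ) • iVec (v g1) := hscale g1
    have h2 : iVec (g2 : Fin n → ℤ) = (dd g2 : ℝ) • iVec (v g2) := hscale g2
    have hdd2pos : (0:ℝ) < (dd g2 : ℝ) := by exact_mod_cast hddpos g2
    have hdd1pos : (0:ℝ) < (dd g1 : ℝ) := by exact_mod_cast hddpos g1
    have h3 : iVec (v g1) = ((dd g1 : ℝ))⁻¹ • iVec (g1 : Fin n → ℤ) := by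
      rw [h1, smul_smul, inv_mul_cancel₀ (ne_of_gt hdd1pos), one_smul]
    have h4 : iVec (g2 : Fin n → ℤ) = ((dd g2 : ℝ) * ((dd g1 : ℝ))⁻¹) • iVec (g1 : Fin n → ℤ) := by
      rw [h2, ← hv12, h3, smul_smul]
    exact hpar (g1 : Fin n → ℤ) g1.2 (g2 : Fin n → ℤ) g2.2 (Ne.symm hne')
      ((dd g2 : ℝ) * ((dd g1 : ℝ))⁻¹) (by positivity) h4
  refine ⟨S.attach.image v, ?_, ?_⟩
  · intro v' hv'
    obtain ⟨g, _, rfl⟩ := Finset.mem_image.1 hv'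
    exact ⟨hvσ g, hvprim g, hray g⟩
  · apply subset_antisymm
    · -- σ ⊆ coneOf V
      intro x hx
      rw [← hS] at hx
      obtain ⟨c, hc, rfl⟩ := hx
      set c' : (Fin n → ℤ) → ℝ := fun y =>
        if hy : y ∈ S.attach.image v then
          c ((Classical.choose (Finset.mem_image.1 hy) : {g // g ∈ S}) : Fin n → ℤ)
            * (dd (Classical.choose (Finset.mem_image.1 hy)) : ℝ)
        else 0 with hc'
      have hc'formula : ∀ g' : {g // g ∈ S},
          c' (v g') = c (g' : Fin n → ℤ) * (dd g' : ℝ) := by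
        intro g'
        have hmem : v g' ∈ S.attach.image v :=
          Finset.mem_image.2 ⟨g', Finset.mem_attach _ _, rfl⟩
        have hspec := Classical.choose_spec (Finset.mem_image.1 hmem)
        have heqg : Classical.choose (Finset.mem_image.1 hmem) = g' :=
          hinj _ hspec.1 g' (Finset.mem_attach _ _) hspec.2
        rw [hc']
        simp only [hmem, dif_pos]
        rw [heqg]
      refine ⟨c', fun y => ?_, ?_⟩
      · rw [hc']
        by_cases hy : y ∈ S.attach.image v
        · simp only [hy, dif_pos]
          exact mul_nonneg (hc _) (by positivity)
        · simp [hy]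
      · rw [Finset.sum_image hinj]
        rw [← Finset.sum_attach S (fun g' => c g' • iVec g')]
        exact Finset.sum_congr rfl fun g' _ => by
          rw [hc'formula g', hscale g', smul_smul]
    · -- coneOf V ⊆ σ
      rintro x ⟨c, hc, rfl⟩
      exact sum_smul_mem hS.symm _ (fun v' hv' => by
        obtain ⟨g, _, rfl⟩ := Finset.mem_image.1 hv'
        exact hvσ g) c hc

lemma pR_sub_left (a b x : Fin n → ℝ) : pR (a - b) x = pR a x - pR b x := by
  simp [pR, sub_mul, Finset.sum_sub_distrib]

lemma pR_smul_left (t : ℝ) (a x : Fin n → ℝ) : pR (t • a) x = t * pR a x := by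
  simp only [pR, Finset.mul_sum, Pi.smul_apply, smul_eq_mul]
  exact Finset.sum_congr rfl fun i _ => by ring

lemma pR_self_pos {x : Fin n → ℝ} (hx : x ≠ 0) : 0 < pR x x := by
  have h1 : ∃ i, x i ≠ 0 := by
    by_contra h
    push_neg at h
    exact hx (funext h)
  obtain ⟨i, hi⟩ := h1
  exact Finset.sum_pos' (fun j _ => mul_self_nonneg (x j))
    ⟨i, Finset.mem_univ i, mul_self_pos.2 hi⟩

lemma pairL_eq (m : Fin n → ℤ) (x : Fin n → ℝ) : pairL m x = pR (iVec m) x := rfl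

lemma pairL_add (a b : Fin n → ℤ) (x : Fin n → ℝ) :
    pairL (a + b) x = pairL a x + pairL b x := by
  simp [pairL, add_mul, Finset.sum_add_distrib]

lemma pairL_sub (a b : Fin n → ℤ) (x : Fin n → ℝ) :
    pairL (a - b) x = pairL a x - pairL b x := by
  simp [pairL, sub_mul, Finset.sum_sub_distrib]

lemma pairL_int (m v : Fin n → ℤ) : pairL m (iVec v) = ((∑ i, m i * v i : ℤ) : ℝ) := by
  push_cast [pairL, iVec]
  rfl

lemma primitive_ne_zero {v : Fin n → ℤ} (hv : Primitive v) : v ≠ 0 := by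
  intro h
  have := hv 0 0 (by rw [h]; simp)
  omega

lemma pR_continuous (x : Fin n → ℝ) : Continuous (fun y : Fin n → ℝ => pR y x) := by
  apply continuous_finset_sum
  intro i _
  exact (continuous_apply i).mul continuous_const


end Stmt8X


open Stmt8X in
/-- Let `σ ⊂ N_ℝ` be a full-dimensional rational polyhedral cone containing no
line, with dual monoid `P = σ^∨ ∩ M`.  If `ρ ∈ P` takes the value `1` on the primitive
generator of every one-dimensional face of `σ`, then `ρ + P` is exactly the set of lattice
points in the topological interior of `σ^∨`; moreover such `ρ` is unique. -/
theorem stmt8 (n : ℕ) (σ : Set (Fin n → ℝ)) (gens : Finset (Fin n → ℤ))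
    (hσ : σ = {x | ∃ c : gens → ℝ, (∀ g, 0 ≤ c g) ∧
      x = ∑ g : gens, c g • iVec (g : Fin n → ℤ)})
    (hfull : Submodule.span ℝ σ = ⊤)
    (hline : ∀ x ∈ σ, -x ∈ σ → x = 0)
    (ρ : Fin n → ℤ)
    (hρP : ∀ x ∈ σ, 0 ≤ pairL ρ x)
    (hρ1 : ∀ v : Fin n → ℤ, iVec v ∈ σ → Primitive v → IsRayFace σ v →
      pairL ρ (iVec v) = 1) :
    {m : Fin n → ℤ | ∃ p : Fin n → ℤ, (∀ x ∈ σ, 0 ≤ pairL p x) ∧ m = ρ + p} =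
      {m : Fin n → ℤ | iVec m ∈ interior {y : Fin n → ℝ | ∀ x ∈ σ, 0 ≤ ∑ i, y i * x i}} ∧
    ∀ ρ' : Fin n → ℤ, (∀ x ∈ σ, 0 ≤ pairL ρ' x) →
      (∀ v : Fin n → ℤ, iVec v ∈ σ → Primitive v → IsRayFace σ v →
        pairL ρ' (iVec v) = 1) →
      ρ' = ρ := by
  classical
  have hσc : σ = coneOf gens := by
    rw [coneOf_eq_fgCone]
    exact hσ
  obtain ⟨V, hVprop, hVgen⟩ := main_struct σ gens hσc hline
  have hρ1V : ∀ v' ∈ V, pairL ρ (iVec v') = 1 := fun v' hv' =>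
    hρ1 v' (hVprop v' hv').1 (hVprop v' hv').2.1 (hVprop v' hv').2.2
  have hVσ : ∀ v' ∈ V, iVec v' ∈ σ := fun v' hv' => (hVprop v' hv').1
  have hVne : ∀ v' ∈ V, iVec v' ≠ 0 := by
    intro v' hv' h0
    exact primitive_ne_zero (hVprop v' hv').2.1 (iVec_eq_zero h0)
  set D := {y : Fin n → ℝ | ∀ x ∈ σ, 0 ≤ ∑ i, y i * x i} with hD
  -- decomposition of pairL over V
  have hdecomp : ∀ (q : Fin n → ℤ), (∀ v' ∈ V, 0 ≤ pairL q (iVec v')) →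
      ∀ x ∈ σ, 0 ≤ pairL q x := by
    intro q hq x hx
    rw [hVgen] at hx
    obtain ⟨c, hc, rfl⟩ := hx
    rw [pairL_eq, pR_sum_right]
    apply Finset.sum_nonneg
    intro v' hv'
    rw [pR_smul_right]
    exact mul_nonneg (hc v') ((pairL_eq q _) ▸ hq v' hv')
  constructor
  · ext m
    simp only [Set.mem_setOf_eq]
    constructor
    · rintro ⟨p, hp, rfl⟩
      -- show iVec (ρ + p) in interior D via the open set O
      set O := ⋂ v' : {v // v ∈ V}, {y : Fin n → ℝ | 0 < pR y (iVec (v' : Fin n → ℤ))} with hO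
      have hOopen : IsOpen O := by
        apply isOpen_iInter_of_finite
        intro v'
        exact isOpen_lt continuous_const (pR_continuous _)
      have hOD : O ⊆ D := by
        intro y hy x hx
        rw [hVgen] at hx
        obtain ⟨c, hc, rfl⟩ := hx
        show (0:ℝ) ≤ pR y _
        rw [pR_sum_right]
        apply Finset.sum_nonneg
        intro v' hv'
        rw [pR_smul_right]
        exact mul_nonneg (hc v') (le_of_lt (Set.mem_iInter.1 hy ⟨v', hv'⟩))
      have hmemO : iVec (ρ + p) ∈ O := by
        rw [hO, Set.mem_iInter]
        rintro ⟨v', hv'⟩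
        show 0 < pR (iVec (ρ + p)) (iVec v')
        rw [← pairL_eq, pairL_add, hρ1V v' hv']
        have := hp _ (hVσ v' hv')
        linarith [hp (iVec v') (hVσ v' hv')]
      exact interior_maximal hOD hOopen hmemO
    · intro hm
      have hpos : ∀ x ∈ σ, x ≠ 0 → 0 < pR (iVec m) x := by
        intro x hx hx0
        have hcont : Continuous (fun ε : ℝ => iVec m - ε • x) := by
          apply continuous_const.sub
          exact continuous_id.smul continuous_const
        have hopen2 : IsOpen ((fun ε : ℝ => iVec m - ε • x) ⁻¹' interior D) :=
          (isOpen_interior).preimage hcont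
        have h0mem : (0:ℝ) ∈ (fun ε : ℝ => iVec m - ε • x) ⁻¹' interior D := by
          simp only [Set.mem_preimage, zero_smul, sub_zero]
          exact hm
        obtain ⟨ε, hε, hball⟩ := Metric.isOpen_iff.1 hopen2 0 h0mem
        have hmem2 : iVec m - (ε/2) • x ∈ D := by
          have : (ε/2 : ℝ) ∈ Metric.ball (0:ℝ) ε := by
            rw [Metric.mem_ball, dist_zero_right, Real.norm_eq_abs, abs_of_pos (half_pos hε)]
            linarith
          exact interior_subset (hball this)
        have h3 := hmem2 x hx
        have h4 : (0:ℝ) ≤ pR (iVec m - (ε/2) • x) x := h3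
        rw [pR_sub_left, pR_smul_left] at h4
        have h5 := pR_self_pos hx0
        nlinarith
      have hge1 : ∀ v' ∈ V, (1:ℝ) ≤ pairL m (iVec v') := by
        intro v' hv'
        have h1 : 0 < pairL m (iVec v') := by
          rw [pairL_eq]
          exact hpos _ (hVσ v' hv') (hVne v' hv')
        rw [pairL_int] at h1 ⊢
        have : (0:ℤ) < ∑ i, m i * v' i := by exact_mod_cast h1
        have : (1:ℤ) ≤ ∑ i, m i * v' i := this
        exact_mod_cast this
      refine ⟨m - ρ, ?_, by ring⟩
      apply hdecomp
      intro v' hv'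
      rw [pairL_sub, hρ1V v' hv']
      linarith [hge1 v' hv']
  · intro ρ' hρ'P hρ'1
    have hρ'1V : ∀ v' ∈ V, pairL ρ' (iVec v') = 1 := fun v' hv' =>
      hρ'1 v' (hVprop v' hv').1 (hVprop v' hv').2.1 (hVprop v' hv').2.2
    set L : (Fin n → ℝ) →ₗ[ℝ] ℝ :=
      { toFun := fun x => pR (iVec ρ' - iVec ρ) x
        map_add' := fun x y => pR_add_right _ x y
        map_smul' := fun t x => by show pR _ (t • x) = _; rw [pR_smul_right]; rfl } with hL
    have hσker : σ ⊆ (LinearMap.ker L : Submodule ℝ (Fin n → ℝ)) := by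
      intro x hx
      rw [hVgen] at hx
      obtain ⟨c, hc, rfl⟩ := hx
      have : L (∑ v' ∈ V, c v' • iVec v') = 0 := by
        show pR (iVec ρ' - iVec ρ) _ = 0
        rw [pR_sum_right]
        apply Finset.sum_eq_zero
        intro v' hv'
        rw [pR_smul_right, pR_sub_left, ← pairL_eq, ← pairL_eq, hρ1V v' hv', hρ'1V v' hv']
        ring
      exact LinearMap.mem_ker.2 this
    have hker : (⊤ : Submodule ℝ (Fin n → ℝ)) ≤ LinearMap.ker L := by
      rw [← hfull]
      exact Submodule.span_le.2 hσker
    have hzero : ∀ x, pR (iVec ρ' - iVec ρ) x = 0 := by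
      intro x
      exact LinearMap.mem_ker.1 (hker (Submodule.mem_top : x ∈ ⊤))
    funext i
    have h1 := hzero (fun j => if i = j then 1 else 0)
    have h2 : pR (iVec ρ' - iVec ρ) (fun j => if i = j then 1 else 0)
        = (iVec ρ' - iVec ρ) i := by
      rw [pR]
      rw [Finset.sum_eq_single i]
      · simp
      · intro j _ hj
        simp [Ne.symm hj]
      · intro h
        exact absurd (Finset.mem_univ i) h
    rw [h2] at h1
    have h3 : (ρ' i : ℝ) = (ρ i : ℝ) := by
      have := h1
      simp only [Pi.sub_apply, iVec, sub_eq_zero] at this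
      exact this
    exact_mod_cast h3
end

section
/- Let P be a sharp toric monoid with dual P^∨ = Hom(P, ℕ). The assignment sending a face τ of P to the face τ^⊥ ∩ P^∨ = {φ ∈ P^∨ : φ(τ) = 0} is an inclusion-reversing bijection between the faces of P and the faces of P^∨; equivalently, it induces a homeomorphism Spec(P)* ≅ Spec(P^∨) between the dual of the prime spectrum of P and the prime spectrum of P^∨. -/
open Matrix Finset

variable {n : ℕ}

abbrev V (n : ℕ) := Fin n → ℚ

lemma dot_sum {k : ℕ} (f : Fin k → V n) (y : V n) :
    (∑ i, f i) ⬝ᵥ y = ∑ i, f i ⬝ᵥ y := by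
  simp only [dotProduct, Finset.sum_apply, Finset.sum_mul]
  rw [Finset.sum_comm]

lemma smul_dot (t : ℚ) (v y : V n) : (t • v) ⬝ᵥ y = t * (v ⬝ᵥ y) := by
  simp [dotProduct, Finset.mul_sum, mul_assoc]

lemma dot_smul (t : ℚ) (v y : V n) : v ⬝ᵥ (t • y) = t * (v ⬝ᵥ y) := by
  simp [dotProduct, Finset.mul_sum]; apply Finset.sum_congr rfl; intros; ring

lemma dot_self_pos {v : V n} (hv : v ≠ 0) : 0 < v ⬝ᵥ v := by
  rcases eq_or_lt_of_le (Finset.sum_nonneg fun i _ => mul_self_nonneg (v i) :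
      (0:ℚ) ≤ v ⬝ᵥ v) with h | h
  · exact absurd (dotProduct_self_eq_zero.mp h.symm) hv
  · exact h

/-- membership in the cone generated by a finite family -/
def InCone {k : ℕ} (w : Fin k → V n) (v : V n) : Prop :=
  ∃ c : Fin k → ℚ, (∀ i, 0 ≤ c i) ∧ ∑ i, c i • w i = v

lemma InCone.zero {k : ℕ} (w : Fin k → V n) : InCone w 0 :=
  ⟨0, fun _ => le_refl _, by simp⟩

lemma InCone.gen {k : ℕ} (w : Fin k → V n) (i : Fin k) : InCone w (w i) := by
  refine ⟨fun j => if j = i then 1 else 0, fun j => by positivity, ?_⟩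
  simp [ite_smul, Finset.sum_ite_eq']

lemma InCone.add {k : ℕ} {w : Fin k → V n} {v v' : V n} (h : InCone w v) (h' : InCone w v') :
    InCone w (v + v') := by
  obtain ⟨c, hc, rfl⟩ := h; obtain ⟨c', hc', rfl⟩ := h'
  exact ⟨c + c', fun i => add_nonneg (hc i) (hc' i), by simp [add_smul, Finset.sum_add_distrib]⟩

lemma InCone.smul {k : ℕ} {w : Fin k → V n} {v : V n} (h : InCone w v) {t : ℚ} (ht : 0 ≤ t) :
    InCone w (t • v) := by
  obtain ⟨c, hc, rfl⟩ := h
  refine ⟨fun i => t * c i, fun i => mul_nonneg ht (hc i), ?_⟩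
  rw [Finset.smul_sum]
  exact Finset.sum_congr rfl fun i _ => (smul_smul t (c i) (w i)).symm

lemma InCone.dot_nonneg {k : ℕ} {w : Fin k → V n} {v : V n} (h : InCone w v) {y : V n}
    (hy : ∀ i, 0 ≤ w i ⬝ᵥ y) : 0 ≤ v ⬝ᵥ y := by
  obtain ⟨c, hc, rfl⟩ := h
  rw [dot_sum]
  exact Finset.sum_nonneg fun i _ => by
    rw [smul_dot]; exact mul_nonneg (hc i) (hy i)

/-- Farkas' lemma. -/
theorem farkas : ∀ {k : ℕ} (w : Fin k → V n) (v : V n), ¬ InCone w v →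
    ∃ y : V n, (∀ i, 0 ≤ w i ⬝ᵥ y) ∧ v ⬝ᵥ y < 0 := by
  intro k
  induction k with
  | zero =>
    intro w v hv
    refine ⟨-v, fun i => i.elim0, ?_⟩
    have hne : v ≠ 0 := by rintro rfl; exact hv (InCone.zero w)
    have := dot_self_pos hne
    rw [dotProduct_neg]; linarith
  | succ k ih =>
    intro w v hv
    set w' : Fin k → V n := fun i => w i.castSucc with hw'
    have hvc : ¬ InCone w' v := by
      rintro ⟨c, hc, hsum⟩
      refine hv ⟨Fin.snoc c 0, ?_, ?_⟩
      · intro i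
        induction i using Fin.lastCases with
        | last => simp
        | cast j => simpa using hc j
      · rw [Fin.sum_univ_castSucc]
        simp only [Fin.snoc_castSucc, Fin.snoc_last, zero_smul, add_zero]
        exact hsum
    obtain ⟨y, hy, hvy⟩ := ih w' v hvc
    by_cases hlast : 0 ≤ w (Fin.last k) ⬝ᵥ y
    · refine ⟨y, fun i => ?_, hvy⟩
      induction i using Fin.lastCases with
      | last => exact hlast
      | cast j => exact hy j
    · push_neg at hlast
      set z : V n := w (Fin.last k) with hz
      have hzy : z ⬝ᵥ y < 0 := hlast
      have hzy0 : z ⬝ᵥ y ≠ 0 := ne_of_lt hzy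
      set r : Fin k → ℚ := fun i => (w' i ⬝ᵥ y) / (z ⬝ᵥ y) with hr
      set rv : ℚ := (v ⬝ᵥ y) / (z ⬝ᵥ y) with hrv
      have hrv_pos : 0 < rv := div_pos_of_neg_of_neg hvy hzy
      have hr_nonpos : ∀ i, r i ≤ 0 := fun i =>
        div_nonpos_of_nonneg_of_nonpos (hy i) hzy.le
      set w'' : Fin k → V n := fun i => w' i - r i • z with hw''
      set v' : V n := v - rv • z with hv'def
      have hv'' : ¬ InCone w'' v' := by
        rintro ⟨c, hc, hsum⟩
        apply hv
        refine ⟨Fin.snoc c (rv - ∑ j, c j * r j), ?_, ?_⟩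
        · intro i
          induction i using Fin.lastCases with
          | last =>
            simp only [Fin.snoc_last]
            have h2 : ∑ j, c j * r j ≤ 0 :=
              Finset.sum_nonpos fun j _ =>
                mul_nonpos_of_nonneg_of_nonpos (hc j) (hr_nonpos j)
            linarith
          | cast j => simpa using hc j
        · rw [Fin.sum_univ_castSucc]
          simp only [Fin.snoc_castSucc, Fin.snoc_last, ← hz]
          have expand : ∑ i : Fin k, c i • w i.castSucc
              = v' + (∑ j, c j * r j) • z := by
            have : ∑ i : Fin k, c i • w'' i = ∑ i : Fin k, (c i • w i.castSucc - (c i * r i) • z) := by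
              refine Finset.sum_congr rfl fun i _ => ?_
              rw [hw'']
              simp only [smul_sub, smul_smul]
              rfl
            rw [this, Finset.sum_sub_distrib, ← Finset.sum_smul] at hsum
            have := hsum
            rw [sub_eq_iff_eq_add] at this
            rw [this]
          rw [expand, hv'def]
          rw [sub_smul]
          abel
      obtain ⟨y', hy', hvy'⟩ := ih w'' v' hv''
      set y'' : V n := y' - ((z ⬝ᵥ y') / (z ⬝ᵥ y)) • y with hy''def
      have key : ∀ u : V n, u ⬝ᵥ y'' = (u - ((u ⬝ᵥ y) / (z ⬝ᵥ y)) • z) ⬝ᵥ y' := by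
        intro u
        rw [hy''def, dotProduct_sub, dot_smul, sub_dotProduct, smul_dot]
        have h1 : z ⬝ᵥ y' = y' ⬝ᵥ z := dotProduct_comm _ _
        have h2 : u ⬝ᵥ y' = y' ⬝ᵥ u := dotProduct_comm _ _
        field_simp
      refine ⟨y'', fun i => ?_, ?_⟩
      · induction i using Fin.lastCases with
        | last =>
          rw [key, ← hz, sub_dotProduct, smul_dot]
          rw [div_mul_eq_mul_div, mul_comm, mul_div_assoc, div_self hzy0, mul_one]
          simp
        | cast j =>
          rw [key]
          have : w j.castSucc - ((w j.castSucc ⬝ᵥ y) / (z ⬝ᵥ y)) • z = w'' j := rfl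
          rw [this]
          exact hy' j
      · rw [key]
        exact hvy'

section weyl

open scoped Classical

-- generalize InCone to arbitrary finite index types
def InConeF {ι : Type} [Fintype ι] (w : ι → V n) (v : V n) : Prop :=
  ∃ c : ι → ℚ, (∀ i, 0 ≤ c i) ∧ ∑ i, c i • w i = v

lemma InConeF.zero {ι : Type} [Fintype ι] (w : ι → V n) : InConeF w 0 :=
  ⟨0, fun _ => le_refl _, by simp⟩

lemma InConeF.gen {ι : Type} [Fintype ι] (w : ι → V n) (i : ι) : InConeF w (w i) := by
  refine ⟨fun j => if j = i then 1 else 0, fun j => by positivity, ?_⟩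
  simp [ite_smul, Finset.sum_ite_eq']

lemma InConeF.add {ι : Type} [Fintype ι] {w : ι → V n} {v v' : V n} (h : InConeF w v)
    (h' : InConeF w v') : InConeF w (v + v') := by
  obtain ⟨c, hc, rfl⟩ := h; obtain ⟨c', hc', rfl⟩ := h'
  exact ⟨c + c', fun i => add_nonneg (hc i) (hc' i), by simp [add_smul, Finset.sum_add_distrib]⟩

lemma InConeF.smul {ι : Type} [Fintype ι] {w : ι → V n} {v : V n} (h : InConeF w v) {t : ℚ}
    (ht : 0 ≤ t) : InConeF w (t • v) := by
  obtain ⟨c, hc, rfl⟩ := h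
  refine ⟨fun i => t * c i, fun i => mul_nonneg ht (hc i), ?_⟩
  rw [Finset.smul_sum]
  exact Finset.sum_congr rfl fun i _ => (smul_smul t (c i) (w i)).symm

lemma InConeF.reindex {ι ι' : Type} [Fintype ι] [Fintype ι'] (e : ι' ≃ ι) (w : ι → V n)
    (v : V n) : InConeF (w ∘ e) v ↔ InConeF w v := by
  constructor
  · rintro ⟨c, hc, rfl⟩
    refine ⟨c ∘ e.symm, fun i => hc _, ?_⟩
    rw [← Equiv.sum_comp e (fun i => (c ∘ e.symm) i • w i)]
    simp
  · rintro ⟨c, hc, rfl⟩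
    refine ⟨c ∘ e, fun i => hc _, ?_⟩
    exact Equiv.sum_comp e (fun i => c i • w i)

lemma farkasF {ι : Type} [Fintype ι] (w : ι → V n) (v : V n) (h : ¬ InConeF w v) :
    ∃ y : V n, (∀ i, 0 ≤ w i ⬝ᵥ y) ∧ v ⬝ᵥ y < 0 := by
  have e := (Fintype.equivFin ι).symm
  have h' : ¬ InCone (w ∘ e) v := by
    intro hc
    exact h (((InConeF.reindex e w v)).mp hc)
  obtain ⟨y, hy, hvy⟩ := farkas (w ∘ e) v h'
  exact ⟨y, fun i => by simpa using hy (e.symm i), hvy⟩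

lemma dot_sum' {ι : Type} [Fintype ι] (y : V n) (f : ι → V n) :
    (∑ i, f i) ⬝ᵥ y = ∑ i, f i ⬝ᵥ y := by
  simp only [dotProduct, Finset.sum_apply, Finset.sum_mul]
  rw [Finset.sum_comm]

lemma dot_sum_smul {ι : Type} [Fintype ι] (a : V n) (c : ι → ℚ) (u : ι → V n) :
    a ⬝ᵥ (∑ i, c i • u i) = ∑ i, c i * (a ⬝ᵥ u i) := by
  rw [dotProduct_comm, dot_sum']
  exact Finset.sum_congr rfl fun i _ => by rw [smul_dot, dotProduct_comm]

lemma InConeF.dot_nonneg {ι : Type} [Fintype ι] {w : ι → V n} {v : V n} (h : InConeF w v)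
    {y : V n} (hy : ∀ i, 0 ≤ w i ⬝ᵥ y) : 0 ≤ v ⬝ᵥ y := by
  obtain ⟨c, hc, rfl⟩ := h
  rw [dot_sum' y (fun i => c i • w i)]
  exact Finset.sum_nonneg fun i _ => by
    rw [smul_dot]; exact mul_nonneg (hc i) (hy i)

/-- intersecting a finitely generated cone with a halfspace gives a f.g. cone -/
lemma dd_step {ι : Type} [Fintype ι] [DecidableEq ι] (u : ι → V n) (a : V n) :
    ∃ (ι' : Type) (_ : Fintype ι') (g : ι' → V n),
      ∀ v, InConeF g v ↔ (InConeF u v ∧ 0 ≤ a ⬝ᵥ v) := by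
  set g : (ι ⊕ ι × ι) → V n := Sum.elim
      (fun i => if 0 ≤ a ⬝ᵥ u i then u i else 0)
      (fun p => if 0 < a ⬝ᵥ u p.1 ∧ a ⬝ᵥ u p.2 < 0 then
          (a ⬝ᵥ u p.1) • u p.2 + (-(a ⬝ᵥ u p.2)) • u p.1 else 0) with hg
  have hgen_cone : ∀ x : ι ⊕ ι × ι, InConeF u (g x) ∧ 0 ≤ a ⬝ᵥ g x := by
    rintro (i | ⟨i, j⟩)
    · simp only [hg, Sum.elim_inl]
      split
      · exact ⟨InConeF.gen u i, by assumption⟩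
      · exact ⟨InConeF.zero u, by simp⟩
    · simp only [hg, Sum.elim_inr]
      split
      · rename_i hcond
        obtain ⟨h1, h2⟩ := hcond
        constructor
        · exact ((InConeF.gen u j).smul h1.le).add ((InConeF.gen u i).smul (by linarith))
        · rw [dotProduct_add, dot_smul, dot_smul]
          nlinarith
      · exact ⟨InConeF.zero u, by simp⟩
  refine ⟨ι ⊕ ι × ι, inferInstance, g, fun v => ⟨?_, ?_⟩⟩
  · rintro ⟨c, hc, rfl⟩
    constructor
    · have : ∀ x, InConeF u (c x • g x) := fun x => ((hgen_cone x).1).smul (hc x)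
      exact Finset.sum_induction _ (InConeF u) (fun _ _ => InConeF.add) (InConeF.zero u)
        (fun x _ => this x)
    · rw [dotProduct_comm, dot_sum']
      refine Finset.sum_nonneg fun x _ => ?_
      rw [dotProduct_comm, dot_smul]
      exact mul_nonneg (hc x) (hgen_cone x).2
  · rintro ⟨⟨c, hc, rfl⟩, hav⟩
    -- the hard direction, by induction on a measure
    set K := Fintype.card ι with hK
    have main : ∀ (N : ℕ) (c : ι → ℚ), (∀ i, 0 ≤ c i) →
        ((Finset.univ.filter fun i => c i ≠ 0 ∧ a ⬝ᵥ u i < 0).card * (K + 1)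
          + (Finset.univ.filter fun i => c i ≠ 0 ∧ 0 < a ⬝ᵥ u i).card ≤ N) →
        0 ≤ a ⬝ᵥ (∑ i, c i • u i) → InConeF g (∑ i, c i • u i) := by
      intro N
      induction N with
      | zero =>
        intro c hc hm hav
        have hneg : ∀ i, ¬ (c i ≠ 0 ∧ a ⬝ᵥ u i < 0) := by
          intro i hi
          have h1 : (Finset.univ.filter fun i => c i ≠ 0 ∧ a ⬝ᵥ u i < 0).card ≥ 1 :=
            Finset.card_pos.mpr ⟨i, Finset.mem_filter.mpr ⟨Finset.mem_univ _, hi⟩⟩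
          have h2 : 1 * (K+1) ≤ (Finset.univ.filter fun i => c i ≠ 0 ∧ a ⬝ᵥ u i < 0).card * (K+1) :=
            Nat.mul_le_mul_right _ h1
          omega
        -- direct representation
        refine ⟨Sum.elim (fun i => if 0 ≤ a ⬝ᵥ u i then c i else 0) 0, ?_, ?_⟩
        · rintro (i | p)
          · simp only [Sum.elim_inl]; split; exacts [hc i, le_refl _]
          · simp
        · rw [Fintype.sum_sum_type]
          simp only [Sum.elim_inl, Sum.elim_inr, Pi.zero_apply, zero_smul,
            Finset.sum_const_zero, add_zero]
          refine Finset.sum_congr rfl fun i _ => ?_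
          simp only [hg, Sum.elim_inl]
          by_cases h : 0 ≤ a ⬝ᵥ u i
          · simp [h]
          · have : c i = 0 := by
              by_contra hne
              exact hneg i ⟨hne, lt_of_not_ge h⟩
            simp [h, this]
      | succ N ih =>
        intro c hc hm hav
        by_cases hNeg : (Finset.univ.filter fun i => c i ≠ 0 ∧ a ⬝ᵥ u i < 0) = ∅
        · -- same as base case
          have hneg : ∀ i, ¬ (c i ≠ 0 ∧ a ⬝ᵥ u i < 0) := by
            intro i hi
            have : i ∈ (Finset.univ.filter fun i => c i ≠ 0 ∧ a ⬝ᵥ u i < 0) :=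
              Finset.mem_filter.mpr ⟨Finset.mem_univ _, hi⟩
            rw [hNeg] at this
            exact absurd this (Finset.notMem_empty i)
          refine ⟨Sum.elim (fun i => if 0 ≤ a ⬝ᵥ u i then c i else 0) 0, ?_, ?_⟩
          · rintro (i | p)
            · simp only [Sum.elim_inl]; split; exacts [hc i, le_refl _]
            · simp
          · rw [Fintype.sum_sum_type]
            simp only [Sum.elim_inl, Sum.elim_inr, Pi.zero_apply, zero_smul,
            Finset.sum_const_zero, add_zero]
            refine Finset.sum_congr rfl fun i _ => ?_
            simp only [hg, Sum.elim_inl]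
            by_cases h : 0 ≤ a ⬝ᵥ u i
            · simp [h]
            · have : c i = 0 := by
                by_contra hne
                exact hneg i ⟨hne, lt_of_not_ge h⟩
              simp [h, this]
        · obtain ⟨j, hj⟩ := Finset.nonempty_iff_ne_empty.mpr hNeg
          rw [Finset.mem_filter] at hj
          obtain ⟨-, hcj, haj⟩ := hj
          have hcjpos : 0 < c j := lt_of_le_of_ne (hc j) (Ne.symm hcj)
          -- find a positive-direction index
          have hpos : ∃ i, c i ≠ 0 ∧ 0 < a ⬝ᵥ u i := by
            by_contra hno
            push_neg at hno
            have hlt : a ⬝ᵥ (∑ i, c i • u i) < 0 := by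
              rw [dot_sum_smul]
              have : ∑ i, c i * (a ⬝ᵥ u i) < ∑ _i : ι, (0:ℚ) :=
                Finset.sum_lt_sum (fun x _ => by
                  by_cases hx : c x = 0
                  · simp [hx]
                  · exact mul_nonpos_of_nonneg_of_nonpos (hc x) (hno x hx))
                  ⟨j, Finset.mem_univ j, mul_neg_of_pos_of_neg hcjpos haj⟩
              simpa using this
            linarith
          obtain ⟨i, hci, hai⟩ := hpos
          have hcipos : 0 < c i := lt_of_le_of_ne (hc i) (Ne.symm hci)
          have hij : i ≠ j := by rintro rfl; linarith
          set α := a ⬝ᵥ u i with hα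
          set β := -(a ⬝ᵥ u j) with hβ
          have hαpos : 0 < α := hai
          have hβpos : 0 < β := by rw [hβ]; linarith
          set t := min (c j / α) (c i / β) with ht
          have htpos : 0 < t := lt_min (div_pos hcjpos hαpos) (div_pos hcipos hβpos)
          set c' := Function.update (Function.update c i (c i - t * β)) j (c j - t * α)
            with hc'def
          have hc'i : c' i = c i - t * β := by
            rw [hc'def, Function.update_of_ne hij, Function.update_self]
          have hc'j : c' j = c j - t * α := by
            rw [hc'def, Function.update_self]
          have hc'other : ∀ x, x ≠ i → x ≠ j → c' x = c x := fun x hxi hxj => by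
            rw [hc'def, Function.update_of_ne hxj, Function.update_of_ne hxi]
          have hc'nonneg : ∀ x, 0 ≤ c' x := by
            intro x
            by_cases hxj : x = j
            · subst hxj
              rw [hc'j]
              have : t ≤ c x / α := min_le_left _ _
              rw [le_div_iff₀ hαpos] at this
              linarith
            · by_cases hxi : x = i
              · subst hxi
                rw [hc'i]
                have : t ≤ c x / β := min_le_right _ _
                rw [le_div_iff₀ hβpos] at this
                linarith
              · rw [hc'other x hxi hxj]; exact hc x
          set gp := α • u j + β • u i with hgp
          have hcond : 0 < a ⬝ᵥ u i ∧ a ⬝ᵥ u j < 0 := ⟨hai, haj⟩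
          have hgpg : g (Sum.inr (i, j)) = gp := by
            simp only [hg, Sum.elim_inr]
            rw [if_pos hcond]
          have hsplit : ∀ d : ι → ℚ, ∑ x, d x • u x
              = d i • u i + (d j • u j + ∑ x ∈ (Finset.univ.erase i).erase j, d x • u x) := by
            intro d
            rw [← Finset.add_sum_erase _ _ (Finset.mem_univ i)]
            congr 1
            rw [← Finset.add_sum_erase _ _ (Finset.mem_erase.mpr ⟨Ne.symm hij, Finset.mem_univ j⟩)]
          have hrest : ∑ x ∈ (Finset.univ.erase i).erase j, c' x • u x
              = ∑ x ∈ (Finset.univ.erase i).erase j, c x • u x := by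
            refine Finset.sum_congr rfl fun x hx => ?_
            rw [Finset.mem_erase, Finset.mem_erase] at hx
            rw [hc'other x hx.2.1 hx.1]
          have hsum_eq : ∑ x, c x • u x = (∑ x, c' x • u x) + t • gp := by
            rw [hsplit c, hsplit c', hc'i, hc'j, hrest, hgp]
            module
          have hav' : 0 ≤ a ⬝ᵥ (∑ x, c' x • u x) := by
            have hgp0 : a ⬝ᵥ gp = 0 := by
              rw [hgp, dotProduct_add, dot_smul, dot_smul, ← hα]
              have : a ⬝ᵥ u j = -β := by rw [hβ]; ring
              rw [this]; ring
            have : a ⬝ᵥ (∑ x, c x • u x)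
                = a ⬝ᵥ (∑ x, c' x • u x) + t * (a ⬝ᵥ gp) := by
              rw [hsum_eq, dotProduct_add, dot_smul]
            rw [hgp0, mul_zero, add_zero] at this
            linarith
          -- measure decreases
          have hsubNeg : (Finset.univ.filter fun x => c' x ≠ 0 ∧ a ⬝ᵥ u x < 0)
              ⊆ (Finset.univ.filter fun x => c x ≠ 0 ∧ a ⬝ᵥ u x < 0) := by
            intro x hx
            rw [Finset.mem_filter] at hx ⊢
            refine ⟨Finset.mem_univ _, ?_, hx.2.2⟩
            by_cases hxi : x = i
            · subst hxi; exact ne_of_gt hcipos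
            · by_cases hxj : x = j
              · subst hxj; exact ne_of_gt hcjpos
              · rw [hc'other x hxi hxj] at hx; exact hx.2.1
          have hsubPos : (Finset.univ.filter fun x => c' x ≠ 0 ∧ 0 < a ⬝ᵥ u x)
              ⊆ (Finset.univ.filter fun x => c x ≠ 0 ∧ 0 < a ⬝ᵥ u x) := by
            intro x hx
            rw [Finset.mem_filter] at hx ⊢
            refine ⟨Finset.mem_univ _, ?_, hx.2.2⟩
            by_cases hxi : x = i
            · subst hxi; exact ne_of_gt hcipos
            · by_cases hxj : x = j
              · subst hxj; exact ne_of_gt hcjpos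
              · rw [hc'other x hxi hxj] at hx; exact hx.2.1
          have hposK : (Finset.univ.filter fun x => c' x ≠ 0 ∧ 0 < a ⬝ᵥ u x).card ≤ K := by
            rw [hK]
            exact (Finset.card_filter_le _ _).trans (le_of_eq (Finset.card_univ))
          have hmeas : (Finset.univ.filter fun x => c' x ≠ 0 ∧ a ⬝ᵥ u x < 0).card * (K + 1)
              + (Finset.univ.filter fun x => c' x ≠ 0 ∧ 0 < a ⬝ᵥ u x).card ≤ N := by
            rcases min_cases (c j / α) (c i / β) with ⟨hmin, -⟩ | ⟨hmin, -⟩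
            · -- t = c j / α hence c' j = 0 : a negative index disappears
              have ht2 : t = c j / α := by rw [ht]; exact hmin
              have hc'j0 : c' j = 0 := by
                rw [hc'j, ht2]
                field_simp
                ring
              have hjNeg : j ∈ (Finset.univ.filter fun x => c x ≠ 0 ∧ a ⬝ᵥ u x < 0) :=
                Finset.mem_filter.mpr ⟨Finset.mem_univ _, hcj, haj⟩
              have hsub2 : (Finset.univ.filter fun x => c' x ≠ 0 ∧ a ⬝ᵥ u x < 0)
                  ⊆ (Finset.univ.filter fun x => c x ≠ 0 ∧ a ⬝ᵥ u x < 0).erase j := by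
                intro x hx
                rw [Finset.mem_erase]
                refine ⟨?_, hsubNeg hx⟩
                rintro rfl
                rw [Finset.mem_filter] at hx
                exact hx.2.1 hc'j0
              have hcard : (Finset.univ.filter fun x => c' x ≠ 0 ∧ a ⬝ᵥ u x < 0).card + 1
                  ≤ (Finset.univ.filter fun x => c x ≠ 0 ∧ a ⬝ᵥ u x < 0).card := by
                have := Finset.card_le_card hsub2
                rw [Finset.card_erase_of_mem hjNeg] at this
                have hpos' : 0 < (Finset.univ.filter fun x => c x ≠ 0 ∧ a ⬝ᵥ u x < 0).card :=
                  Finset.card_pos.mpr ⟨j, hjNeg⟩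
                omega
              have hmul : ((Finset.univ.filter fun x => c' x ≠ 0 ∧ a ⬝ᵥ u x < 0).card + 1) * (K+1)
                  ≤ (Finset.univ.filter fun x => c x ≠ 0 ∧ a ⬝ᵥ u x < 0).card * (K+1) :=
                Nat.mul_le_mul_right _ hcard
              have hm' := hm
              rw [add_mul, one_mul] at hmul
              omega
            · -- t = c i / β hence c' i = 0 : a positive index disappears
              have ht2 : t = c i / β := by rw [ht]; exact hmin
              have hc'i0 : c' i = 0 := by
                rw [hc'i, ht2]
                field_simp
                ring
              have hiPos : i ∈ (Finset.univ.filter fun x => c x ≠ 0 ∧ 0 < a ⬝ᵥ u x) :=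
                Finset.mem_filter.mpr ⟨Finset.mem_univ _, hci, hai⟩
              have hsub2 : (Finset.univ.filter fun x => c' x ≠ 0 ∧ 0 < a ⬝ᵥ u x)
                  ⊆ (Finset.univ.filter fun x => c x ≠ 0 ∧ 0 < a ⬝ᵥ u x).erase i := by
                intro x hx
                rw [Finset.mem_erase]
                refine ⟨?_, hsubPos hx⟩
                rintro rfl
                rw [Finset.mem_filter] at hx
                exact hx.2.1 hc'i0
              have hcard : (Finset.univ.filter fun x => c' x ≠ 0 ∧ 0 < a ⬝ᵥ u x).card + 1
                  ≤ (Finset.univ.filter fun x => c x ≠ 0 ∧ 0 < a ⬝ᵥ u x).card := by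
                have := Finset.card_le_card hsub2
                rw [Finset.card_erase_of_mem hiPos] at this
                have hpos' : 0 < (Finset.univ.filter fun x => c x ≠ 0 ∧ 0 < a ⬝ᵥ u x).card :=
                  Finset.card_pos.mpr ⟨i, hiPos⟩
                omega
              have hmulNeg : (Finset.univ.filter fun x => c' x ≠ 0 ∧ a ⬝ᵥ u x < 0).card * (K+1)
                  ≤ (Finset.univ.filter fun x => c x ≠ 0 ∧ a ⬝ᵥ u x < 0).card * (K+1) :=
                Nat.mul_le_mul_right _ (Finset.card_le_card hsubNeg)
              omega
          have hrec : InConeF g (∑ x, c' x • u x) := ih c' hc'nonneg hmeas hav'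
          rw [hsum_eq]
          refine hrec.add ?_
          rw [← hgpg]
          exact (InConeF.gen g (Sum.inr (i, j))).smul htpos.le
    exact main _ c hc (le_refl _) hav

/-- Weyl: an H-cone is finitely generated. -/
theorem weylF {k : ℕ} (a : Fin k → V n) :
    ∃ (ι : Type) (_ : Fintype ι) (u : ι → V n),
      ∀ v, InConeF u v ↔ ∀ i, 0 ≤ a i ⬝ᵥ v := by
  induction k with
  | zero =>
    refine ⟨Fin n ⊕ Fin n, inferInstance,
      Sum.elim (fun i => Pi.single i 1) (fun i => -(Pi.single i 1)), fun v => ?_⟩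
    refine ⟨fun _ i => i.elim0, fun _ => ?_⟩
    · refine ⟨Sum.elim (fun i => max (v i) 0) (fun i => max (-(v i)) 0), ?_, ?_⟩
      · rintro (i | i) <;> simp [le_max_iff]
      · rw [Fintype.sum_sum_type]
        simp only [Sum.elim_inl, Sum.elim_inr]
        funext x
        simp only [Finset.sum_apply, Pi.add_apply, Pi.smul_apply, Pi.neg_apply,
          Pi.single_apply, smul_eq_mul, mul_ite, mul_one, mul_zero, mul_neg,
          Finset.sum_neg_distrib, Finset.sum_ite_eq, Finset.mem_univ, if_true]
        rcases le_total (v x) 0 with h | h <;> simp [max_def] <;> split_ifs <;> linarith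
  | succ k ih =>
    obtain ⟨ι, hι, u, hu⟩ := ih (fun i => a i.castSucc)
    obtain ⟨ι', hι', g, hgspec⟩ := @dd_step n ι hι (Classical.decEq ι) u (a (Fin.last k))
    refine ⟨ι', hι', g, fun v => ?_⟩
    rw [hgspec v, hu v]
    constructor
    · rintro ⟨h1, h2⟩ i
      induction i using Fin.lastCases with
      | last => exact h2
      | cast j => exact h1 j
    · intro h
      exact ⟨fun i => h i.castSucc, h (Fin.last k)⟩

theorem weylFin {k : ℕ} (a : Fin k → V n) :
    ∃ (mm : ℕ) (u : Fin mm → V n), ∀ v, InConeF u v ↔ ∀ i, 0 ≤ a i ⬝ᵥ v := by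
  obtain ⟨ι, hι, u, hu⟩ := weylF a
  refine ⟨@Fintype.card ι hι, u ∘ (@Fintype.equivFin ι hι).symm, fun v => ?_⟩
  rw [@InConeF.reindex n ι _ hι _ (@Fintype.equivFin ι hι).symm u v]
  exact hu v

/-! ### generic face lemmas -/

/-- A face of a commutative monoid: a submonoid such that `a + b ∈ F` implies
`a ∈ F` and `b ∈ F`. -/
def IsFaceOf {M : Type*} [AddCommMonoid M] (F : Set M) : Prop :=
  (0 ∈ F ∧ ∀ a b : M, a ∈ F → b ∈ F → a + b ∈ F) ∧
    ∀ a b : M, a + b ∈ F → a ∈ F ∧ b ∈ F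

namespace IsFaceOf

variable {M : Type*} [AddCommMonoid M] {τ : Set M}

lemma zero_mem (h : IsFaceOf τ) : 0 ∈ τ := h.1.1

lemma add_mem (h : IsFaceOf τ) {a b : M} (ha : a ∈ τ) (hb : b ∈ τ) : a + b ∈ τ := h.1.2 a b ha hb

lemma split (h : IsFaceOf τ) {a b : M} (hab : a + b ∈ τ) : a ∈ τ ∧ b ∈ τ := h.2 a b hab

lemma sum_mem (h : IsFaceOf τ) {ι : Type*} {t : Finset ι} {f : ι → M}
    (hf : ∀ i ∈ t, f i ∈ τ) : ∑ i ∈ t, f i ∈ τ :=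
  Finset.sum_induction f (· ∈ τ) (fun _ _ ha hb => h.add_mem ha hb) h.zero_mem hf

lemma nsmul_mem (h : IsFaceOf τ) {a : M} (ha : a ∈ τ) (m : ℕ) : m • a ∈ τ := by
  induction m with
  | zero => simpa using h.zero_mem
  | succ k ih => rw [succ_nsmul]; exact h.add_mem ih ha

lemma mem_of_nsmul (h : IsFaceOf τ) {a : M} {m : ℕ} (hm : 0 < m) (ha : m • a ∈ τ) : a ∈ τ := by
  obtain ⟨k, rfl⟩ : ∃ k, m = k + 1 := ⟨m - 1, by omega⟩
  rw [succ_nsmul] at ha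
  exact (h.split ha).2

lemma mem_of_sum (h : IsFaceOf τ) {ι : Type*} {t : Finset ι} {f : ι → M}
    (hsum : ∑ i ∈ t, f i ∈ τ) : ∀ i ∈ t, f i ∈ τ := by
  classical
  induction t using Finset.induction_on with
  | empty => intro i hi; exact absurd hi (Finset.notMem_empty i)
  | insert _ _ hnotmem ih =>
    rename_i a t'
    rw [Finset.sum_insert hnotmem] at hsum
    intro i hi
    rcases Finset.mem_insert.mp hi with rfl | hi'
    · exact (h.split hsum).1
    · exact ih (h.split hsum).2 i hi'

lemma mem_of_smul_sum (h : IsFaceOf τ) {ι : Type*} {t : Finset ι} {c : ι → ℕ} {f : ι → M}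
    (hsum : ∑ i ∈ t, c i • f i ∈ τ) {i : ι} (hi : i ∈ t) (hci : c i ≠ 0) : f i ∈ τ :=
  h.mem_of_nsmul (Nat.pos_of_ne_zero hci) (h.mem_of_sum hsum i hi)

end IsFaceOf

/-! ### the embedding ℤⁿ → ℚⁿ -/

def ro {n : ℕ} (x : Fin n → ℤ) : V n := fun i => (x i : ℚ)

lemma ro_add {n : ℕ} (x y : Fin n → ℤ) : ro (x + y) = ro x + ro y := by
  funext i; simp [ro]

lemma ro_zero {n : ℕ} : ro (0 : Fin n → ℤ) = 0 := by funext i; simp [ro]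

lemma ro_sub {n : ℕ} (x y : Fin n → ℤ) : ro (x - y) = ro x - ro y := by
  funext i; simp [ro]

lemma ro_inj {n : ℕ} {x y : Fin n → ℤ} (h : ro x = ro y) : x = y := by
  funext i
  have h2 := congrFun h i
  simp only [ro] at h2
  exact_mod_cast h2

lemma ro_nsmul {n : ℕ} (m : ℕ) (x : Fin n → ℤ) : ro (m • x) = (m : ℚ) • ro x := by
  funext i; simp [ro, mul_comm]

lemma ro_sum_nsmul {n : ℕ} {ι : Type*} (t : Finset ι) (c : ι → ℕ) (x : ι → Fin n → ℤ) :
    ro (∑ i ∈ t, c i • x i) = ∑ i ∈ t, (c i : ℚ) • ro (x i) := by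
  induction t using Finset.cons_induction with
  | empty => simp [ro_zero]
  | cons a t' ha ih =>
    rw [Finset.sum_cons, Finset.sum_cons, ro_add, ih, ro_nsmul]

/-! ### common denominators -/

lemma den_mul (q : ℚ) : (q.den : ℚ) * q = (q.num : ℚ) := by
  have h : (q.den : ℚ) ≠ 0 := Nat.cast_ne_zero.mpr q.den_nz
  calc (q.den : ℚ) * q = (q.den : ℚ) * ((q.num : ℚ) / (q.den : ℚ)) := by rw [Rat.num_div_den]
    _ = (q.num : ℚ) := by field_simp

lemma common_denom {ι : Type*} [Fintype ι] (c : ι → ℚ) :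
    ∃ N : ℕ, 0 < N ∧ ∀ i, ∃ z : ℤ, (N : ℚ) * c i = (z : ℚ) := by
  classical
  refine ⟨∏ i, (c i).den, Finset.prod_pos fun i _ => (c i).pos, fun i => ?_⟩
  refine ⟨(∏ x ∈ Finset.univ.erase i, ((c x).den : ℤ)) * (c i).num, ?_⟩
  have hN : (∏ j, (c j).den) = (c i).den * ∏ x ∈ Finset.univ.erase i, (c x).den :=
    (Finset.mul_prod_erase _ _ (Finset.mem_univ i)).symm
  rw [hN]
  push_cast
  rw [mul_comm ((c i).den : ℚ), mul_assoc, den_mul]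

lemma common_denom_nat {ι : Type*} [Fintype ι] (c : ι → ℚ) (hc : ∀ i, 0 ≤ c i) :
    ∃ N : ℕ, 0 < N ∧ ∀ i, ∃ m : ℕ, (N : ℚ) * c i = (m : ℚ) := by
  obtain ⟨N, hN, h⟩ := common_denom c
  refine ⟨N, hN, fun i => ?_⟩
  obtain ⟨z, hz⟩ := h i
  have hz0 : (0:ℚ) ≤ (z:ℚ) := by
    rw [← hz]
    exact mul_nonneg (by positivity) (hc i)
  refine ⟨z.toNat, ?_⟩
  rw [hz]
  norm_cast
  exact (Int.toNat_of_nonneg (by exact_mod_cast hz0)).symm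

/-! ### extension of ℕ-valued monoid homs to linear functionals -/

section Bridge

variable {n : ℕ} {P : AddSubmonoid (Fin n → ℤ)}

lemma exists_decomp (hfull : AddSubgroup.closure (P : Set (Fin n → ℤ)) = ⊤)
    (z : Fin n → ℤ) : ∃ p q : ↥P, z = ↑p - ↑q := by
  let S : AddSubgroup (Fin n → ℤ) :=
    { carrier := {z | ∃ p q : ↥P, z = ↑p - ↑q}
      zero_mem' := ⟨0, 0, by simp⟩
      add_mem' := by
        rintro a b ⟨p, q, rfl⟩ ⟨p', q', rfl⟩
        exact ⟨p + p', q + q', by push_cast; ring⟩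
      neg_mem' := by
        rintro a ⟨p, q, rfl⟩
        exact ⟨q, p, by push_cast; ring⟩ }
  have hle : AddSubgroup.closure (P : Set (Fin n → ℤ)) ≤ S :=
    (AddSubgroup.closure_le S).mpr (fun x hx => ⟨⟨x, hx⟩, 0, by simp⟩)
  have hz : z ∈ AddSubgroup.closure (P : Set (Fin n → ℤ)) := by
    rw [hfull]; trivial
  exact hle hz

lemma wd_sub (φ : ↥P →+ ℕ) {p q p' q' : ↥P} (h : (↑p : Fin n → ℤ) - ↑q = ↑p' - ↑q') :
    (φ p : ℚ) - φ q = (φ p' : ℚ) - φ q' := by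
  have h2 : p + q' = p' + q := by
    apply Subtype.ext
    push_cast
    linear_combination h
  have h3 : φ p + φ q' = φ p' + φ q := by rw [← map_add, ← map_add, h2]
  have h4 : ((φ p + φ q' : ℕ) : ℚ) = ((φ p' + φ q : ℕ) : ℚ) := by exact_mod_cast h3
  push_cast at h4
  linarith

lemma exists_phivec (hfull : AddSubgroup.closure (P : Set (Fin n → ℤ)) = ⊤)
    (φ : ↥P →+ ℕ) : ∃ y : V n, ∀ p : ↥P, ro ↑p ⬝ᵥ y = (φ p : ℚ) := by
  choose f g hfg using exists_decomp hfull
  set D : (Fin n → ℤ) → ℚ := fun z => (φ (f z) : ℚ) - φ (g z) with hD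
  have hDspec : ∀ (z : Fin n → ℤ) (p q : ↥P), z = ↑p - ↑q → D z = (φ p : ℚ) - φ q := by
    intro z p q h
    exact wd_sub φ (by rw [← hfg z, ← h])
  have hDadd : ∀ z w, D (z + w) = D z + D w := by
    intro z w
    have hzw : z + w = ↑(f z + f w) - ↑(g z + g w) := by
      have h1 := hfg z
      have h2 := hfg w
      push_cast
      linear_combination h1 + h2
    rw [hDspec (z + w) _ _ hzw, hD]
    simp only [map_add]
    push_cast
    ring
  set Dh : (Fin n → ℤ) →+ ℚ := AddMonoidHom.mk' D hDadd with hDh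
  refine ⟨fun j => Dh (Pi.single j (1:ℤ)), fun p => ?_⟩
  have key : ∀ z : Fin n → ℤ, ro z ⬝ᵥ (fun j => Dh (Pi.single j 1)) = Dh z := by
    intro z
    have h1 : ro z ⬝ᵥ (fun j => Dh (Pi.single j (1:ℤ))) = ∑ j, (z j : ℚ) * Dh (Pi.single j (1:ℤ)) := by
      simp [dotProduct, ro]
    rw [h1]
    have h2 : ∀ j, (z j : ℚ) * Dh (Pi.single j (1:ℤ)) = Dh (Pi.single j (z j)) := by
      intro j
      have h3 : (Pi.single j (z j) : Fin n → ℤ) = z j • (Pi.single j (1:ℤ) : Fin n → ℤ) := by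
        funext x
        simp [Pi.single_apply, mul_ite]
      rw [h3, map_zsmul, zsmul_eq_mul]
    rw [Finset.sum_congr rfl (fun j _ => h2 j), ← map_sum]
    congr 1
    exact Finset.univ_sum_single z
  rw [key ↑p]
  have : Dh ↑p = D ↑p := rfl
  rw [this, hDspec ↑p p 0 (by simp)]
  simp

lemma vec_ext (hfull : AddSubgroup.closure (P : Set (Fin n → ℤ)) = ⊤)
    {y y' : V n} (h : ∀ p : ↥P, ro ↑p ⬝ᵥ y = ro ↑p ⬝ᵥ y') : y = y' := by
  funext j
  obtain ⟨p, q, hpq⟩ := exists_decomp hfull (Pi.single j 1)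
  have hsingle : ∀ w : V n, ro (Pi.single j (1:ℤ)) ⬝ᵥ w = w j := by
    intro w
    have h5 : ro (Pi.single j (1:ℤ)) = Pi.single j (1:ℚ) := by
      funext x
      simp [ro, Pi.single_apply]
    rw [h5, single_dotProduct, one_mul]
  have h6 : ro (Pi.single j 1) ⬝ᵥ y = ro (Pi.single j 1) ⬝ᵥ y' := by
    rw [hpq, ro_sub, sub_dotProduct, sub_dotProduct, h p, h q]
  rwa [hsingle, hsingle] at h6

/-! ### integer dot products -/

def dotz {n : ℕ} (x y : Fin n → ℤ) : ℤ := ∑ j, x j * y j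

lemma dotz_cast {n : ℕ} (x y : Fin n → ℤ) : ((dotz x y : ℤ) : ℚ) = ro x ⬝ᵥ ro y := by
  simp only [dotz, dotProduct, ro]
  push_cast
  rfl

lemma dotz_add_left {n : ℕ} (x x' y : Fin n → ℤ) :
    dotz (x + x') y = dotz x y + dotz x' y := by
  simp only [dotz, Pi.add_apply, add_mul, Finset.sum_add_distrib]

/-- the `ℕ`-valued hom on `P` induced by an integral vector of the dual cone -/
noncomputable def mkHom (P : AddSubmonoid (Fin n → ℤ)) (y : Fin n → ℤ)
    (hy : ∀ p : ↥P, 0 ≤ dotz ↑p y) : ↥P →+ ℕ where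
  toFun := fun p => (dotz ↑p y).toNat
  map_zero' := by simp [dotz]
  map_add' := by
    intro p q
    show (dotz ↑(p + q) y).toNat = (dotz ↑p y).toNat + (dotz ↑q y).toNat
    have hco : (↑(p + q) : Fin n → ℤ) = ↑p + ↑q := rfl
    rw [hco, dotz_add_left, Int.toNat_add (hy p) (hy q)]

lemma mkHom_spec (P : AddSubmonoid (Fin n → ℤ)) (y : Fin n → ℤ)
    (hy : ∀ p : ↥P, 0 ≤ dotz ↑p y) (p : ↥P) :
    ((mkHom P y hy p : ℕ) : ℚ) = ro ↑p ⬝ᵥ ro y := by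
  rw [← dotz_cast]
  simp only [mkHom, AddMonoidHom.coe_mk, ZeroHom.coe_mk]
  have := Int.toNat_of_nonneg (hy p)
  exact_mod_cast congrArg (fun z : ℤ => (z : ℚ)) this

end Bridge

section Main

variable {n : ℕ} {P : AddSubmonoid (Fin n → ℤ)}

lemma gen_mem (s : Finset (Fin n → ℤ)) (hs : AddSubmonoid.closure (s : Set (Fin n → ℤ)) = P)
    (i : Fin s.card) : (↑(s.equivFin.symm i) : Fin n → ℤ) ∈ P := by
  rw [← hs]
  exact AddSubmonoid.subset_closure (s.equivFin.symm i).2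

lemma rep_mem (s : Finset (Fin n → ℤ)) (hs : AddSubmonoid.closure (s : Set (Fin n → ℤ)) = P)
    {x : Fin n → ℤ} (hx : x ∈ P) :
    ∃ c : Fin s.card → ℕ, x = ∑ i, c i • (↑(s.equivFin.symm i) : Fin n → ℤ) := by
  classical
  rw [← hs] at hx
  induction hx using AddSubmonoid.closure_induction with
  | mem g hg =>
    refine ⟨fun i => if i = s.equivFin ⟨g, hg⟩ then 1 else 0, ?_⟩
    simp only [ite_smul, one_smul, zero_smul, Finset.sum_ite_eq', Finset.mem_univ, if_true,
      Equiv.symm_apply_apply]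
  | zero => exact ⟨0, by simp⟩
  | add a b ha hb iha ihb =>
    obtain ⟨c1, hc1⟩ := iha
    obtain ⟨c2, hc2⟩ := ihb
    refine ⟨c1 + c2, ?_⟩
    rw [hc1, hc2, ← Finset.sum_add_distrib]
    exact Finset.sum_congr rfl fun i _ => by rw [Pi.add_apply, add_smul]

lemma rep_memP (s : Finset (Fin n → ℤ)) (hs : AddSubmonoid.closure (s : Set (Fin n → ℤ)) = P)
    (x : ↥P) :
    ∃ c : Fin s.card → ℕ,
      x = ∑ i, c i • (⟨↑(s.equivFin.symm i), gen_mem s hs i⟩ : ↥P) := by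
  obtain ⟨c, hc⟩ := rep_mem s hs x.2
  refine ⟨c, Subtype.ext ?_⟩
  push_cast
  exact hc

lemma coneP (s : Finset (Fin n → ℤ)) (hs : AddSubmonoid.closure (s : Set (Fin n → ℤ)) = P)
    (p : ↥P) :
    InConeF (fun i : Fin s.card => ro (↑(s.equivFin.symm i) : Fin n → ℤ)) (ro ↑p) := by
  obtain ⟨c, hc⟩ := rep_mem s hs p.2
  refine ⟨fun i => (c i : ℚ), fun i => by positivity, ?_⟩
  rw [← ro_sum_nsmul, ← hc]

lemma separation (s : Finset (Fin n → ℤ)) (hs : AddSubmonoid.closure (s : Set (Fin n → ℤ)) = P)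
    (hfull : AddSubgroup.closure (P : Set (Fin n → ℤ)) = ⊤)
    {τ : Set ↥P} (hτ : IsFaceOf τ) {x : ↥P} (hx : x ∉ τ) :
    ∃ φ : ↥P →+ ℕ, (∀ z ∈ τ, φ z = 0) ∧ φ x ≠ 0 := by
  classical
  set k := s.card with hk
  set gP : Fin k → ↥P := fun i => ⟨↑(s.equivFin.symm i), gen_mem s hs i⟩ with hgP
  set w : Fin k → V n := fun i => ro ↑(gP i) with hw
  set pv : Fin k → ↥P := fun i => if gP i ∈ τ then gP i else 0 with hpv
  have hpvτ : ∀ i, pv i ∈ τ := by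
    intro i
    rw [hpv]
    dsimp only
    split
    · assumption
    · exact hτ.zero_mem
  set T : Fin k → V n := fun i => ro ↑(pv i) with hT
  set G : (Fin k ⊕ Fin k ⊕ Fin k) → V n := Sum.elim w (Sum.elim T (fun i => -(T i))) with hG
  have hnc : ¬ InConeF G (-(ro ↑x)) := by
    rintro ⟨c, hc, hsum⟩
    rw [Fintype.sum_sum_type, Fintype.sum_sum_type] at hsum
    simp only [hG, Sum.elim_inl, Sum.elim_inr, smul_neg] at hsum
    rw [Finset.sum_neg_distrib] at hsum
    have heq : ro ↑x + ∑ i, c (Sum.inl i) • w i + ∑ i, c (Sum.inr (Sum.inl i)) • T i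
        = ∑ i, c (Sum.inr (Sum.inr i)) • T i := by
      linear_combination hsum
    obtain ⟨N, hN, hden⟩ := common_denom_nat c hc
    choose d hd using hden
    have hNsmul := congrArg (fun v => (N : ℚ) • v) heq
    simp only [smul_add, Finset.smul_sum, smul_smul] at hNsmul
    have hrw : ∀ (f : Fin k → V n) (c' : Fin k ⊕ Fin k ⊕ Fin k → ℚ)
        (d' : Fin k ⊕ Fin k ⊕ Fin k → ℕ) (emb : Fin k → Fin k ⊕ Fin k ⊕ Fin k),
        (∀ i, (N:ℚ) * c' (emb i) = d' (emb i)) →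
        ∑ i, ((N:ℚ) * c' (emb i)) • f i = ∑ i, (d' (emb i) : ℚ) • f i :=
      fun f c' d' emb hem => Finset.sum_congr rfl fun i _ => by rw [hem i]
    rw [hrw w c d Sum.inl (fun i => hd _), hrw T c d (fun i => Sum.inr (Sum.inl i)) (fun i => hd _),
      hrw T c d (fun i => Sum.inr (Sum.inr i)) (fun i => hd _)] at hNsmul
    -- convert to an equation in ℤⁿ
    have hZ : ro (N • (↑x : Fin n → ℤ) + ∑ i, d (Sum.inl i) • (↑(gP i) : Fin n → ℤ)
          + ∑ i, d (Sum.inr (Sum.inl i)) • (↑(pv i) : Fin n → ℤ))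
        = ro (∑ i, d (Sum.inr (Sum.inr i)) • (↑(pv i) : Fin n → ℤ)) := by
      rw [ro_add, ro_add, ro_nsmul, ro_sum_nsmul, ro_sum_nsmul, ro_sum_nsmul]
      exact hNsmul
    have hZ' := ro_inj hZ
    have hlift : N • x + ∑ i, d (Sum.inl i) • gP i + ∑ i, d (Sum.inr (Sum.inl i)) • pv i
        = ∑ i, d (Sum.inr (Sum.inr i)) • pv i := by
      apply Subtype.ext
      push_cast
      exact hZ'
    have hrhs : ∑ i, d (Sum.inr (Sum.inr i)) • pv i ∈ τ :=
      hτ.sum_mem fun i _ => hτ.nsmul_mem (hpvτ i) _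
    rw [← hlift] at hrhs
    have h3 := (hτ.split ((hτ.split hrhs).1)).1
    exact hx (hτ.mem_of_nsmul hN h3)
  obtain ⟨y, hy, hvy⟩ := farkasF G (-(ro ↑x)) hnc
  have hyw : ∀ i, 0 ≤ w i ⬝ᵥ y := fun i => by simpa [hG] using hy (Sum.inl i)
  have hyT : ∀ i, T i ⬝ᵥ y = 0 := by
    intro i
    have h1 : 0 ≤ T i ⬝ᵥ y := by simpa [hG] using hy (Sum.inr (Sum.inl i))
    have h2 : 0 ≤ -(T i) ⬝ᵥ y := by simpa [hG] using hy (Sum.inr (Sum.inr i))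
    rw [neg_dotProduct] at h2
    linarith
  have hxy : 0 < ro ↑x ⬝ᵥ y := by
    rw [neg_dotProduct] at hvy
    linarith
  -- make y integral
  obtain ⟨M, hM, hMy⟩ := common_denom y
  choose yz hyz using hMy
  have hroyz : ro yz = (M : ℚ) • y := by
    funext j
    simp [ro, ← hyz j]
  have hdotM : ∀ z : Fin n → ℤ, ((dotz z yz : ℤ) : ℚ) = (M : ℚ) * (ro z ⬝ᵥ y) := by
    intro z
    rw [dotz_cast, hroyz, dot_smul]
  have hge : ∀ p : ↥P, 0 ≤ dotz ↑p yz := by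
    intro p
    have h1 : 0 ≤ ro ↑p ⬝ᵥ y := (coneP s hs p).dot_nonneg hyw
    have h2 : (0:ℚ) ≤ ((dotz ↑p yz : ℤ) : ℚ) := by
      rw [hdotM]
      positivity
    exact_mod_cast h2
  refine ⟨mkHom P yz hge, ?_, ?_⟩
  · intro z hz
    have hdot0 : ro ↑z ⬝ᵥ y = 0 := by
      obtain ⟨c, hc⟩ := rep_memP s hs z
      have hc2 : z = ∑ i, c i • gP i := hc
      have hcz : ∀ i, c i ≠ 0 → gP i ∈ τ := by
        intro i hci
        refine hτ.mem_of_smul_sum (f := gP) (t := Finset.univ) ?_ (Finset.mem_univ i) hci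
        rw [← hc2]
        exact hz
      have hro : ro ↑z = ∑ i, (c i : ℚ) • w i := by
        have h7 := congrArg (fun t : ↥P => (↑t : Fin n → ℤ)) hc2
        push_cast at h7
        rw [h7, ro_sum_nsmul]
      rw [hro, dot_sum' y (fun i => (c i : ℚ) • w i)]
      refine Finset.sum_eq_zero fun i _ => ?_
      rw [smul_dot]
      by_cases hci : c i = 0
      · rw [hci]; simp
      · have hgiτ := hcz i hci
        have : T i = w i := by
          rw [hT, hw, hpv]
          simp [hgiτ]
        rw [← this, hyT i, mul_zero]
    show (dotz ↑z yz).toNat = 0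
    have h4 : ((dotz ↑z yz : ℤ) : ℚ) = 0 := by
      rw [hdotM, hdot0, mul_zero]
    have h5 : dotz ↑z yz = 0 := by exact_mod_cast h4
    rw [h5]
    rfl
  · show (dotz ↑x yz).toNat ≠ 0
    have h4 : (0:ℚ) < ((dotz ↑x yz : ℤ) : ℚ) := by
      rw [hdotM]
      positivity
    have h5 : 0 < dotz ↑x yz := by exact_mod_cast h4
    omega

lemma surj_face (s : Finset (Fin n → ℤ)) (hs : AddSubmonoid.closure (s : Set (Fin n → ℤ)) = P)
    (hfull : AddSubgroup.closure (P : Set (Fin n → ℤ)) = ⊤)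
    {F : Set (↥P →+ ℕ)} (hF : IsFaceOf F) (φ : ↥P →+ ℕ)
    (hvan : ∀ x : ↥P, (∀ ψ ∈ F, ψ x = 0) → φ x = 0) : φ ∈ F := by
  classical
  set k := s.card with hk
  set gP : Fin k → ↥P := fun i => ⟨↑(s.equivFin.symm i), gen_mem s hs i⟩ with hgP
  set w : Fin k → V n := fun i => ro (↑(s.equivFin.symm i) : Fin n → ℤ) with hw
  have hwg : ∀ i, w i = ro ↑(gP i) := fun i => rfl
  choose Y hY using exists_phivec (P := P) hfull
  obtain ⟨mm, u, hu⟩ := weylFin w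
  have huD : ∀ j i, 0 ≤ w i ⬝ᵥ u j := fun j => (hu (u j)).mp (InConeF.gen u j)
  have hint : ∀ j : Fin mm, ∃ (m : ℕ) (z : Fin n → ℤ), 0 < m ∧ ro z = (m : ℚ) • u j := by
    intro j
    obtain ⟨m, hm, h⟩ := common_denom (u j)
    choose zz hz using h
    exact ⟨m, zz, hm, by funext t; simp [ro, ← hz t]⟩
  choose m uz hm huz using hint
  have hge : ∀ (j : Fin mm) (p : ↥P), 0 ≤ dotz ↑p (uz j) := by
    intro j p
    have h1 : 0 ≤ ro ↑p ⬝ᵥ u j := (coneP s hs p).dot_nonneg (huD j)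
    have h2 : (0:ℚ) ≤ ((dotz ↑p (uz j) : ℤ) : ℚ) := by
      rw [dotz_cast, huz j, dot_smul]
      positivity
    exact_mod_cast h2
  set ψ : Fin mm → (↥P →+ ℕ) := fun j => mkHom P (uz j) (hge j) with hψ
  set uu : Fin mm → V n := fun j => ro (uz j) with huu
  have hdotuu : ∀ (j : Fin mm) (p : ↥P), ro ↑p ⬝ᵥ uu j = ((ψ j p : ℕ) : ℚ) := by
    intro j p
    rw [huu]
    exact (mkHom_spec P (uz j) (hge j) p).symm
  have hYψ : ∀ j, Y (ψ j) = uu j := by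
    intro j
    apply vec_ext hfull
    intro p
    rw [hY (ψ j) p, hdotuu j p]
  have hhomD : ∀ χ : ↥P →+ ℕ, InConeF u (Y χ) := by
    intro χ
    rw [hu]
    intro i
    have h8 := hY χ (gP i)
    rw [show w i ⬝ᵥ Y χ = ro ↑(gP i) ⬝ᵥ Y χ from rfl, h8]
    positivity
  have cone_iff : ∀ v, InConeF uu v ↔ InConeF u v := by
    intro v
    constructor
    · rintro ⟨c, hc, rfl⟩
      refine ⟨fun j => c j * m j, fun j => mul_nonneg (hc j) (by positivity), ?_⟩
      refine Finset.sum_congr rfl fun j _ => ?_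
      simp only [huu]
      rw [huz j, smul_smul]
    · rintro ⟨c, hc, rfl⟩
      refine ⟨fun j => c j / m j, fun j => div_nonneg (hc j) (by positivity), ?_⟩
      refine Finset.sum_congr rfl fun j _ => ?_
      simp only [huu]
      rw [huz j, smul_smul, div_mul_cancel₀]
      exact Nat.cast_ne_zero.mpr (hm j).ne'
  have happly : ∀ (χs : Fin mm → (↥P →+ ℕ)) (e : Fin mm → ℕ) (p : ↥P),
      ((∑ j, e j • χs j) p : ℕ) = ∑ j, e j * χs j p := by
    intro χs e p
    rw [AddMonoidHom.finset_sum_apply]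
    exact Finset.sum_congr rfl fun j _ => by simp
  have hds : ∀ (p : ↥P) (cc : Fin mm → ℚ) (X : Fin mm → V n),
      ro ↑p ⬝ᵥ (∑ j, cc j • X j) = ∑ j, cc j * (ro ↑p ⬝ᵥ X j) := by
    intro p cc X
    rw [dotProduct_comm, dot_sum']
    exact Finset.sum_congr rfl fun j _ => by rw [smul_dot, dotProduct_comm]
  have hrep : ∀ χ : ↥P →+ ℕ, ∃ (N : ℕ) (e : Fin mm → ℕ), 0 < N ∧ N • χ = ∑ j, e j • ψ j := by
    intro χ
    obtain ⟨c, hc, hsum⟩ := (cone_iff (Y χ)).mpr (hhomD χ)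
    obtain ⟨N, hN, h⟩ := common_denom_nat c hc
    choose e he using h
    refine ⟨N, e, hN, ?_⟩
    ext p
    have h1 : ro ↑p ⬝ᵥ Y χ = ∑ j, c j * (ro ↑p ⬝ᵥ uu j) := by
      rw [← hsum]
      exact hds p c uu
    have h2 : (N : ℚ) * (χ p : ℚ) = ∑ j, (e j : ℚ) * ((ψ j p : ℕ) : ℚ) := by
      rw [← hY χ p, h1, Finset.mul_sum]
      refine Finset.sum_congr rfl fun j _ => ?_
      rw [hdotuu j p, ← he j]
      ring
    have h3 : (((N • χ) p : ℕ) : ℚ) = (((∑ j, e j • ψ j) p : ℕ) : ℚ) := by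
      rw [AddMonoidHom.nsmul_apply, smul_eq_mul, happly ψ e p]
      push_cast
      push_cast at h2
      rw [h2]
    exact_mod_cast h3
  have hmemF : ∀ χ ∈ F, ∀ x : ↥P, (∀ j, ψ j ∈ F → ψ j x = 0) → χ x = 0 := by
    intro χ hχ x hjx
    obtain ⟨N, e, hN, hNχ⟩ := hrep χ
    have hNF : N • χ ∈ F := hF.nsmul_mem hχ N
    have hsumF : ∑ j, e j • ψ j ∈ F := hNχ ▸ hNF
    have hψF : ∀ j, e j ≠ 0 → ψ j ∈ F := fun j hj =>
      hF.mem_of_smul_sum hsumF (Finset.mem_univ j) hj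
    have h1 : (N • χ) x = ∑ j, e j * ψ j x := by rw [hNχ, happly ψ e x]
    have h2 : ∑ j, e j * ψ j x = 0 :=
      Finset.sum_eq_zero fun j _ => by
        by_cases hj : e j = 0
        · rw [hj, zero_mul]
        · rw [hjx j (hψF j hj), mul_zero]
    rw [h2, AddMonoidHom.nsmul_apply, smul_eq_mul] at h1
    exact (Nat.mul_eq_zero.mp h1).resolve_left hN.ne'
  -- the dichotomy
  set Tψ : Fin mm → V n := fun j => if ψ j ∈ F then uu j else 0 with hTψ
  set ρ : Fin mm → (↥P →+ ℕ) := fun j => if ψ j ∈ F then ψ j else 0 with hρ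
  have hρF : ∀ j, ρ j ∈ F := by
    intro j
    rw [hρ]
    dsimp only
    split
    · assumption
    · exact hF.zero_mem
  have hdotTψ : ∀ (j : Fin mm) (p : ↥P), ro ↑p ⬝ᵥ Tψ j = ((ρ j p : ℕ) : ℚ) := by
    intro j p
    rw [hTψ, hρ]
    dsimp only
    split
    · exact hdotuu j p
    · simp
  set G' : (Fin mm ⊕ Fin mm ⊕ Fin mm) → V n := Sum.elim uu (Sum.elim Tψ (fun j => -(Tψ j))) with hG'
  by_cases hcase : InConeF G' (-(Y φ))
  · -- case 1 : φ ∈ F directly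
    obtain ⟨c, hc, hsum⟩ := hcase
    rw [Fintype.sum_sum_type, Fintype.sum_sum_type] at hsum
    simp only [hG', Sum.elim_inl, Sum.elim_inr, smul_neg] at hsum
    rw [Finset.sum_neg_distrib] at hsum
    have heq : Y φ + ∑ j, c (Sum.inl j) • uu j + ∑ j, c (Sum.inr (Sum.inl j)) • Tψ j
        = ∑ j, c (Sum.inr (Sum.inr j)) • Tψ j := by
      linear_combination hsum
    obtain ⟨N, hN, hden⟩ := common_denom_nat c hc
    choose d hd using hden
    -- evaluate at each p
    have heval : ∀ p : ↥P,
        N * φ p + ∑ j, d (Sum.inl j) * ψ j p + ∑ j, d (Sum.inr (Sum.inl j)) * ρ j p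
          = ∑ j, d (Sum.inr (Sum.inr j)) * ρ j p := by
      intro p
      have hdq := congrArg (fun v => ro ↑p ⬝ᵥ v) heq
      simp only [dotProduct_add] at hdq
      rw [hds p _ uu, hds p _ Tψ, hds p _ Tψ] at hdq
      have hNq := congrArg (fun t : ℚ => (N:ℚ) * t) hdq
      simp only [mul_add, Finset.mul_sum] at hNq
      have ht1 : ∀ j, (N:ℚ) * (c (Sum.inl j) * (ro ↑p ⬝ᵥ uu j))
          = (d (Sum.inl j) : ℚ) * ((ψ j p : ℕ):ℚ) := fun j => by
        rw [hdotuu j p, ← hd (Sum.inl j)]; ring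
      have ht2 : ∀ j, (N:ℚ) * (c (Sum.inr (Sum.inl j)) * (ro ↑p ⬝ᵥ Tψ j))
          = (d (Sum.inr (Sum.inl j)) : ℚ) * ((ρ j p : ℕ):ℚ) := fun j => by
        rw [hdotTψ j p, ← hd (Sum.inr (Sum.inl j))]; ring
      have ht3 : ∀ j, (N:ℚ) * (c (Sum.inr (Sum.inr j)) * (ro ↑p ⬝ᵥ Tψ j))
          = (d (Sum.inr (Sum.inr j)) : ℚ) * ((ρ j p : ℕ):ℚ) := fun j => by
        rw [hdotTψ j p, ← hd (Sum.inr (Sum.inr j))]; ring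
      rw [Finset.sum_congr rfl (fun j _ => ht1 j), Finset.sum_congr rfl (fun j _ => ht2 j),
        Finset.sum_congr rfl (fun j _ => ht3 j), hY φ p] at hNq
      exact_mod_cast hNq
    have hhomeq : N • φ + ∑ j, d (Sum.inl j) • ψ j + ∑ j, d (Sum.inr (Sum.inl j)) • ρ j
        = ∑ j, d (Sum.inr (Sum.inr j)) • ρ j := by
      ext p
      simp only [AddMonoidHom.add_apply, AddMonoidHom.nsmul_apply, smul_eq_mul]
      rw [happly ψ _ p, happly ρ _ p, happly ρ _ p]
      exact heval p
    have hrhsF : ∑ j, d (Sum.inr (Sum.inr j)) • ρ j ∈ F :=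
      hF.sum_mem fun j _ => hF.nsmul_mem (hρF j) _
    rw [← hhomeq] at hrhsF
    have h4 := (hF.split ((hF.split hrhsF).1)).1
    exact hF.mem_of_nsmul hN h4
  · -- case 2 : contradiction
    exfalso
    obtain ⟨ξ, hξ, hξφ⟩ := farkasF G' (-(Y φ)) hcase
    have hξu : ∀ j, 0 ≤ uu j ⬝ᵥ ξ := fun j => by simpa [hG'] using hξ (Sum.inl j)
    have hξT : ∀ j, Tψ j ⬝ᵥ ξ = 0 := by
      intro j
      have h1 : 0 ≤ Tψ j ⬝ᵥ ξ := by simpa [hG'] using hξ (Sum.inr (Sum.inl j))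
      have h2 : 0 ≤ -(Tψ j) ⬝ᵥ ξ := by simpa [hG'] using hξ (Sum.inr (Sum.inr j))
      rw [neg_dotProduct] at h2
      linarith
    have hYφξ : 0 < Y φ ⬝ᵥ ξ := by
      rw [neg_dotProduct] at hξφ
      linarith
    -- ξ lies in the cone generated by w
    have hξC : InConeF w ξ := by
      by_contra hno
      obtain ⟨η, hη, hξη⟩ := farkasF w ξ hno
      have hηu : InConeF uu η := (cone_iff η).mpr ((hu η).mpr hη)
      obtain ⟨c, hc, hsum⟩ := hηu
      have : 0 ≤ η ⬝ᵥ ξ := by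
        rw [← hsum, dot_sum']
        exact Finset.sum_nonneg fun j _ => by
          rw [smul_dot]
          exact mul_nonneg (hc j) (hξu j)
      rw [dotProduct_comm] at this
      linarith
    obtain ⟨lam, hlam, hlamsum⟩ := hξC
    obtain ⟨N', hN', hden'⟩ := common_denom_nat lam hlam
    choose dc hdc using hden'
    set zp : ↥P := ∑ i, dc i • gP i with hzp
    have hrozp : ro ↑zp = (N' : ℚ) • ξ := by
      have h7 := congrArg (fun t : ↥P => (↑t : Fin n → ℤ)) hzp
      push_cast at h7
      rw [h7, ro_sum_nsmul, ← hlamsum, Finset.smul_sum]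
      refine Finset.sum_congr rfl fun i _ => ?_
      rw [smul_smul, hdc i, hwg]
    have hψzp : ∀ j, ψ j ∈ F → ψ j zp = 0 := by
      intro j hjF
      have hTj : Tψ j = uu j := by
        rw [hTψ]
        dsimp only
        rw [if_pos hjF]
      have h1 : ((ψ j zp : ℕ) : ℚ) = 0 := by
        rw [← hdotuu j zp, hrozp, smul_dot, dotProduct_comm ξ (uu j), ← hTj, hξT j, mul_zero]
      exact_mod_cast h1
    have hFzp : ∀ χ ∈ F, χ zp = 0 := fun χ hχ => hmemF χ hχ zp hψzp
    have hφzp : φ zp = 0 := hvan zp hFzp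
    have h9 : ((φ zp : ℕ) : ℚ) = (N' : ℚ) * (Y φ ⬝ᵥ ξ) := by
      rw [← hY φ zp, hrozp, smul_dot, dotProduct_comm]
    rw [hφzp] at h9
    have : (0:ℚ) < (N' : ℚ) * (Y φ ⬝ᵥ ξ) := by positivity
    rw [← h9] at this
    simp at this

end Main

/-- Let `P` be a sharp toric monoid (a finitely generated saturated submonoid of
`ℤⁿ`, sharp, generating `ℤⁿ` as a group) with dual `P^∨ = Hom(P, ℕ)`.  The assignment
`τ ↦ τ^⊥ ∩ P^∨ = {φ : φ(τ) = 0}` sends faces to faces and is an inclusion-reversing bijection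
between the faces of `P` and the faces of `P^∨` (equivalently, a homeomorphism
`Spec(P)* ≅ Spec(P^∨)`). -/
theorem stmt18 (n : ℕ) (P : AddSubmonoid (Fin n → ℤ))
    (hfg : ∃ s : Finset (Fin n → ℤ), AddSubmonoid.closure (s : Set (Fin n → ℤ)) = P)
    (hsat : ∀ (x : Fin n → ℤ) (m : ℕ), 0 < m → m • x ∈ P → x ∈ P)
    (hsharp : ∀ x ∈ P, -x ∈ P → x = 0)
    (hfull : AddSubgroup.closure (P : Set (Fin n → ℤ)) = ⊤) :
    (∀ τ : Set ↥P, IsFaceOf τ → IsFaceOf {φ : ↥P →+ ℕ | ∀ x ∈ τ, φ x = 0}) ∧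
    Set.BijOn (fun τ : Set ↥P => {φ : ↥P →+ ℕ | ∀ x ∈ τ, φ x = 0})
      {τ : Set ↥P | IsFaceOf τ} {F : Set (↥P →+ ℕ) | IsFaceOf F} ∧
    (∀ τ τ' : Set ↥P, IsFaceOf τ → IsFaceOf τ' →
      (τ ⊆ τ' ↔
        {φ : ↥P →+ ℕ | ∀ x ∈ τ', φ x = 0} ⊆ {φ : ↥P →+ ℕ | ∀ x ∈ τ, φ x = 0})) := by
  obtain ⟨s, hs⟩ := hfg
  have perp_face : ∀ τ : Set ↥P, IsFaceOf {φ : ↥P →+ ℕ | ∀ x ∈ τ, φ x = 0} := by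
    intro τ
    refine ⟨⟨?_, ?_⟩, ?_⟩
    · intro x _
      simp
    · intro a b ha hb x hx
      simp only [AddMonoidHom.add_apply, ha x hx, hb x hx, add_zero]
    · intro a b hab
      constructor <;> intro x hx <;> have h1 := hab x hx <;>
        simp only [AddMonoidHom.add_apply] at h1 <;> omega
  have rev : ∀ τ τ' : Set ↥P, IsFaceOf τ → IsFaceOf τ' →
      ({φ : ↥P →+ ℕ | ∀ x ∈ τ', φ x = 0} ⊆ {φ : ↥P →+ ℕ | ∀ x ∈ τ, φ x = 0}) → τ ⊆ τ' := by
    intro τ τ' hτ hτ' hsub z hz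
    by_contra hzτ'
    obtain ⟨φ, hφ0, hφz⟩ := separation s hs hfull hτ' hzτ'
    have hmem : φ ∈ {φ : ↥P →+ ℕ | ∀ x ∈ τ', φ x = 0} := hφ0
    exact hφz (hsub hmem z hz)
  refine ⟨fun τ _ => perp_face τ, ⟨?_, ?_, ?_⟩, ?_⟩
  · intro τ _
    exact perp_face τ
  · intro τ hτ τ' hτ' heq
    apply Set.Subset.antisymm
    · exact rev τ τ' hτ hτ' (by rw [show {φ : ↥P →+ ℕ | ∀ x ∈ τ', φ x = 0}
        = {φ : ↥P →+ ℕ | ∀ x ∈ τ, φ x = 0} from heq.symm])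
    · exact rev τ' τ hτ' hτ (by rw [show {φ : ↥P →+ ℕ | ∀ x ∈ τ, φ x = 0}
        = {φ : ↥P →+ ℕ | ∀ x ∈ τ', φ x = 0} from heq])
  · intro F hF
    refine ⟨{x : ↥P | ∀ ψ ∈ F, ψ x = 0}, ?_, ?_⟩
    · show IsFaceOf {x : ↥P | ∀ ψ ∈ F, ψ x = 0}
      refine ⟨⟨?_, ?_⟩, ?_⟩
      · intro ψ _
        simp
      · intro a b ha hb ψ hψ
        rw [map_add, ha ψ hψ, hb ψ hψ, add_zero]
      · intro a b hab
        constructor <;> intro ψ hψ <;> have h1 := hab ψ hψ <;>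
          rw [map_add] at h1 <;> omega
    · apply Set.Subset.antisymm
      · intro φ hφ
        exact surj_face s hs hfull hF φ (fun x hx => hφ x hx)
      · intro ψ hψ x hx
        exact hx ψ hψ
  · intro τ τ' hτ hτ'
    constructor
    · intro hsub φ hφ x hx
      exact hφ x (hsub hx)
    · exact rev τ τ' hτ hτ'
end weyl
end
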